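/- arXiv:2102.08853 — 8 statements merged into one kernel-verified Lean document; each statement's English description precedes it below -/
import Mathlib

section
/- If p ∈ ℝⁿ is a nonzero vector with pᵀ A_{ij} = pᵀ for every edge (v_i,v_j) of a connected graph G, then for any walk w in the bidirectionalized digraph of G from node v_ℓ to node v_k, p_k = R_w · p_ℓ, where R_w is the product of the ratios r_{ij} = a_{ij}/a_{ji} along the walk. -/
open Matrix Finset

/-- The local stochastic matrix `A_{ij}`: identity except for the 2×2 principal
submatrix on rows/columns `i,j`, which is `[[1-a_{ij}, a_{ij}],[a_{ji}, 1-a_{ji}]]`. -/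
def locMat {n : ℕ} (a : Fin n → Fin n → ℝ) (i j : Fin n) : Matrix (Fin n) (Fin n) ℝ :=
  Matrix.of fun k l =>
    if k = i then (if l = i then 1 - a i j else if l = j then a i j else 0)
    else if k = j then (if l = i then a j i else if l = j then 1 - a j i else 0)
    else if k = l then 1 else 0

/-- `R_w`: the product of the ratios `r` along the (directed) edges of a walk `w`. -/
def Rwalk {n : ℕ} (r : Fin n → Fin n → ℝ) {G : SimpleGraph (Fin n)} {u v : Fin n}
    (w : G.Walk u v) : ℝ :=
  (w.darts.map fun d => r d.toProd.1 d.toProd.2).prod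

/-- The local stochastic matrices (given by the weights `a`) are holonomic for `G`:
`R_C = 1` for every cycle `C` of length greater than 2. -/
def Holonomic {n : ℕ} (G : SimpleGraph (Fin n)) (a : Fin n → Fin n → ℝ) : Prop :=
  ∀ (u : Fin n) (c : G.Walk u u), c.IsCycle → 2 < c.length →
    Rwalk (fun i j => a i j / a j i) c = 1

/-! Column `j` of `pᵀ A_{ij} = pᵀ` is the detailed-balance relation `p_i a_{ij} = p_j a_{ji}`,
so each edge of a walk multiplies `p` by `r_{ij}`; induction on the walk multiplies these up. -/

theorem vecMul_locMat_apply_right {n : ℕ} (a : Fin n → Fin n → ℝ) (p : Fin n → ℝ)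
    {i j : Fin n} (hij : i ≠ j) :
    vecMul p (locMat a i j) j = p i * a i j + p j * (1 - a j i) := by
  rw [vecMul, dotProduct, Finset.sum_eq_add_of_mem i j (mem_univ i) (mem_univ j) hij]
  · simp [locMat, hij.symm]
  · intro k _ hk
    simp [locMat, hk.1, hk.2]

theorem eq_div_mul_of_vecMul_locMat_eq {n : ℕ} {a : Fin n → Fin n → ℝ} {p : Fin n → ℝ}
    {i j : Fin n} (hij : i ≠ j) (hji : a j i ≠ 0) (hp : vecMul p (locMat a i j) = p) :
    p j = a i j / a j i * p i := by
  have balance : p i * a i j + p j * (1 - a j i) = p j := by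
    rw [← vecMul_locMat_apply_right a p hij, hp]
  rw [div_mul_eq_mul_div, eq_div_iff hji]
  linarith

theorem Rwalk_cons {n : ℕ} (r : Fin n → Fin n → ℝ) {G : SimpleGraph (Fin n)} {u v w : Fin n}
    (h : G.Adj u v) (q : G.Walk v w) : Rwalk r (.cons h q) = r u v * Rwalk r q := by
  simp [Rwalk]

theorem stmt1_general {n : ℕ} (G : SimpleGraph (Fin n))
    (a : Fin n → Fin n → ℝ) (ha : ∀ i j, G.Adj i j → a i j ∈ Set.Ioo (0:ℝ) 1)
    (p : Fin n → ℝ)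
    (hinv : ∀ i j, G.Adj i j → Matrix.vecMul p (locMat a i j) = p)
    {u v : Fin n} (w : G.Walk u v) :
    p v = Rwalk (fun i j => a i j / a j i) w * p u := by
  induction w with
  | nil => simp [Rwalk]
  | @cons x y _ hxy _ ih =>
    have step : p y = a x y / a y x * p x :=
      eq_div_mul_of_vecMul_locMat_eq hxy.ne (ha y x hxy.symm).1.ne' (hinv x y hxy)
    rw [Rwalk_cons, ih, step]
    ring

/-- If `p ≠ 0` satisfies `pᵀ A_{ij} = pᵀ` for every edge of the connected graph `G`,
then for any walk `w` from `u` to `v`, `p v = R_w · p u`. -/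
theorem stmt1 {n : ℕ} (G : SimpleGraph (Fin n)) (hGc : G.Connected)
    (a : Fin n → Fin n → ℝ) (ha : ∀ i j, G.Adj i j → a i j ∈ Set.Ioo (0:ℝ) 1)
    (p : Fin n → ℝ) (hp : p ≠ 0)
    (hinv : ∀ i j, G.Adj i j → Matrix.vecMul p (locMat a i j) = p)
    {u v : Fin n} (w : G.Walk u v) :
    p v = Rwalk (fun i j => a i j / a j i) w * p u :=
  stmt1_general G a ha p hinv w
end

section
/- Let q and q' be the vectors produced by Algorithm 1 (q_i := R_{w_i} for a walk w_i from the base node to v_i, with q = 1 at the base node) using base nodes v and v' respectively, assuming the local stochastic matrices are holonomic for G. Then q' = R_w · q for any walk w from v' to v; consequently the normalized vector p = q / (∑_i q_i) is independent of the choice of base node. -/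
open Matrix Finset

namespace Rtest
variable {n : ℕ} {G : SimpleGraph (Fin n)} {r : Fin n → Fin n → ℝ}

lemma Rwalk_nil {u : Fin n} : Rwalk r (SimpleGraph.Walk.nil : G.Walk u u) = 1 := by
  simp [Rwalk]

lemma Rwalk_cons {u v x : Fin n} (h : G.Adj u v) (p : G.Walk v x) :
    Rwalk r (SimpleGraph.Walk.cons h p) = r u v * Rwalk r p := by
  simp [Rwalk]

lemma Rwalk_append {u v x : Fin n} (p : G.Walk u v) (q : G.Walk v x) :
    Rwalk r (p.append q) = Rwalk r p * Rwalk r q := by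
  simp [Rwalk, SimpleGraph.Walk.darts_append]

lemma Rwalk_pos (hr : ∀ i j, G.Adj i j → 0 < r i j) {u v : Fin n} (p : G.Walk u v) :
    0 < Rwalk r p := by
  induction p with
  | nil => simp [Rwalk]
  | cons h p ih => rw [Rwalk_cons]; exact mul_pos (hr _ _ h) ih

lemma Rwalk_reverse (hr1 : ∀ i j, G.Adj i j → r i j * r j i = 1) {u v : Fin n}
    (p : G.Walk u v) : Rwalk r p * Rwalk r p.reverse = 1 := by
  induction p with
  | nil => simp [Rwalk]
  | @cons u x v h p ih =>
    rw [SimpleGraph.Walk.reverse_cons, Rwalk_cons, Rwalk_append, Rwalk_cons, Rwalk_nil]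
    have := hr1 u x h
    nlinarith [ih]

lemma Rwalk_closed (hr1 : ∀ i j, G.Adj i j → r i j * r j i = 1)
    (hcyc : ∀ (u : Fin n) (c : G.Walk u u), c.IsCycle → 2 < c.length → Rwalk r c = 1) :
    ∀ (m : ℕ) (u : Fin n) (c : G.Walk u u), c.length ≤ m → Rwalk r c = 1 := by
  intro m
  induction m with
  | zero =>
    intro u c hc
    rw [Nat.le_zero] at hc
    rw [SimpleGraph.Walk.nil_iff_eq_nil.mp (SimpleGraph.Walk.length_eq_zero_iff.mp hc), Rwalk_nil]
  | succ m ih =>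
    intro u c hlen
    cases c with
    | nil => exact Rwalk_nil
    | @cons _ x _ h p =>
      by_cases hnd : p.support.Nodup
      · -- interior vertices distinct
        have hp : p.IsPath := SimpleGraph.Walk.IsPath.mk' hnd
        by_cases he : s(u, x) ∈ p.edges
        · -- then p has length 1, c = u - x - u
          cases p with
          | nil => simp at he
          | @cons _ y _ h' p' =>
            rw [SimpleGraph.Walk.edges_cons, List.mem_cons] at he
            rcases he with he | he
            · have hyu : y = u := by
                rw [Sym2.eq_iff] at he
                rcases he with ⟨h1, h2⟩ | ⟨h1, h2⟩
                · exact absurd h1 h.ne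
                · exact h1.symm
              subst hyu
              have hp' : p' = SimpleGraph.Walk.nil := by
                have : p'.IsPath := by
                  rw [SimpleGraph.Walk.support_cons, List.nodup_cons] at hnd
                  exact SimpleGraph.Walk.IsPath.mk' hnd.2
                exact SimpleGraph.Walk.isPath_iff_eq_nil.mp this
              subst hp'
              rw [Rwalk_cons, Rwalk_cons, Rwalk_nil]
              have := hr1 _ _ h
              nlinarith
            · exfalso
              have hx : x ∈ p'.support := SimpleGraph.Walk.snd_mem_support_of_mem_edges p' he
              rw [SimpleGraph.Walk.support_cons, List.nodup_cons] at hnd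
              exact hnd.1 hx
        · -- c is a cycle
          have hcy : (SimpleGraph.Walk.cons h p).IsCycle :=
            (SimpleGraph.Walk.cons_isCycle_iff p h).mpr ⟨hp, he⟩
          exact hcyc u _ hcy (by have := hcy.three_le_length; omega)
      · -- repeated interior vertex: rotate and split
        obtain ⟨y, hy⟩ := List.exists_duplicate_iff_not_nodup.mpr hnd
        have hcount : 2 ≤ p.support.count y := List.duplicate_iff_two_le_count.mp hy
        have hymem : y ∈ (SimpleGraph.Walk.cons h p).support := by
          rw [SimpleGraph.Walk.support_cons]
          exact List.mem_cons_of_mem _ (List.count_pos_iff.mp (by omega))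
        set c' := (SimpleGraph.Walk.cons h p).rotate y hymem with hc'
        have hdperm : List.Perm c'.darts (SimpleGraph.Walk.cons h p).darts :=
          (SimpleGraph.Walk.rotate_darts _ _ hymem).perm
        have hReq : Rwalk r c' = Rwalk r (SimpleGraph.Walk.cons h p) :=
          (hdperm.map _).prod_eq
        have hlen' : c'.length = (SimpleGraph.Walk.cons h p).length := by
          rw [← SimpleGraph.Walk.length_darts, ← SimpleGraph.Walk.length_darts]
          exact hdperm.length_eq
        have hcount' : 2 ≤ c'.support.tail.count y := by
          have := (SimpleGraph.Walk.support_rotate _ _ hymem).perm.count_eq y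
          rw [this, SimpleGraph.Walk.support_cons, List.tail_cons]
          exact hcount
        have hnn : ¬ c'.Nil := by
          rw [SimpleGraph.Walk.nil_iff_length_eq, hlen', SimpleGraph.Walk.length_cons]
          omega
        obtain ⟨z, h₂, p₂, hdec⟩ := SimpleGraph.Walk.not_nil_iff.mp hnn
        rw [hdec] at hReq hlen' hcount'
        rw [SimpleGraph.Walk.support_cons, List.tail_cons] at hcount'
        have hy₂ : y ∈ p₂.support := List.count_pos_iff.mp (by omega)
        set t := p₂.takeUntil y hy₂ with ht
        set d := p₂.dropUntil y hy₂ with hd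
        have hspec : t.append d = p₂ := SimpleGraph.Walk.take_spec p₂ hy₂
        have hct : t.support.count y = 1 :=
          SimpleGraph.Walk.count_support_takeUntil_eq_one p₂ hy₂
        have hcd : 1 ≤ d.support.tail.count y := by
          have : p₂.support = t.support ++ d.support.tail := by
            rw [← hspec, SimpleGraph.Walk.support_append]
          rw [this, List.count_append] at hcount'
          omega
        have hdlen : 1 ≤ d.length := by
          by_contra hcon
          have : d.length = 0 := by omega
          rw [SimpleGraph.Walk.nil_iff_eq_nil.mp (SimpleGraph.Walk.length_eq_zero_iff.mp this)] at hcd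
          simp at hcd
        have hlsum : t.length + d.length = p₂.length := by
          rw [← hspec, SimpleGraph.Walk.length_append]
        rw [← hspec, ← SimpleGraph.Walk.cons_append, Rwalk_append] at hReq
        simp only [SimpleGraph.Walk.length_cons] at hlen hlen'
        have h1 : Rwalk r (SimpleGraph.Walk.cons h₂ t) = 1 := by
          apply ih y
          rw [SimpleGraph.Walk.length_cons]
          omega
        have h2 : Rwalk r d = 1 := by
          apply ih y
          omega
        rw [h1, h2, one_mul] at hReq
        exact hReq.symm

lemma Rwalk_indep (hr : ∀ i j, G.Adj i j → 0 < r i j)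
    (hr1 : ∀ i j, G.Adj i j → r i j * r j i = 1)
    (hcyc : ∀ (u : Fin n) (c : G.Walk u u), c.IsCycle → 2 < c.length → Rwalk r c = 1)
    {u v : Fin n} (p q : G.Walk u v) : Rwalk r p = Rwalk r q := by
  have h1 : Rwalk r (p.append q.reverse) = 1 :=
    Rwalk_closed hr1 hcyc _ u _ le_rfl
  rw [Rwalk_append] at h1
  have h2 := Rwalk_reverse hr1 q
  have h3 : Rwalk r q.reverse ≠ 0 := ne_of_gt (Rwalk_pos hr _)
  exact mul_right_cancel₀ h3 (h1.trans h2.symm)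

end Rtest

/-- Algorithm 1 output is independent of the base node: if `q` and `q'` are produced
with base nodes `v` and `v'` respectively, then `q' = R_w · q` for any walk `w` from
`v'` to `v`, and the normalized vectors coincide. -/
theorem stmt4 {n : ℕ} (G : SimpleGraph (Fin n)) (hGc : G.Connected)
    (a : Fin n → Fin n → ℝ) (ha : ∀ i j, G.Adj i j → a i j ∈ Set.Ioo (0:ℝ) 1)
    (hol : Holonomic G a)
    (v v' : Fin n)
    (wi : ∀ i : Fin n, G.Walk v i) (wi' : ∀ i : Fin n, G.Walk v' i)
    (q q' : Fin n → ℝ)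
    (hq : ∀ i, q i = Rwalk (fun i j => a i j / a j i) (wi i))
    (hq' : ∀ i, q' i = Rwalk (fun i j => a i j / a j i) (wi' i))
    (w : G.Walk v' v) :
    (∀ i, q' i = Rwalk (fun i j => a i j / a j i) w * q i) ∧
    (fun i => q' i / ∑ j, q' j) = (fun i => q i / ∑ j, q j) := by

  classical
  set r : Fin n → Fin n → ℝ := fun i j => a i j / a j i with hr_def
  have hr : ∀ i j, G.Adj i j → 0 < r i j := fun i j hij =>
    div_pos (ha i j hij).1 (ha j i hij.symm).1
  have hr1 : ∀ i j, G.Adj i j → r i j * r j i = 1 := by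
    intro i j hij
    have h1 := (ha i j hij).1.ne'
    have h2 := (ha j i hij.symm).1.ne'
    simp only [hr_def]
    field_simp
  have part1 : ∀ i, q' i = Rwalk r w * q i := by
    intro i
    rw [hq', hq]
    have hind : Rwalk r (wi' i) = Rwalk r (w.append (wi i)) :=
      Rtest.Rwalk_indep hr hr1 hol _ _
    rw [hind, Rtest.Rwalk_append]
  refine ⟨part1, ?_⟩
  funext i
  have hsum : ∑ j, q' j = Rwalk r w * ∑ j, q j := by
    rw [Finset.mul_sum]
    exact Finset.sum_congr rfl fun j _ => part1 j
  rw [part1 i, hsum, mul_div_mul_left _ _ (ne_of_gt (Rtest.Rwalk_pos hr w))]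
end

section
/- Let z ∈ ℝⁿ be nonnegative, γ a finite sequence of edges of G, and e an edge of G; set γ' = γ followed by e, z_γ = P_γ z and z_{γ'} = P_{γ'} z, where P denotes the ordered product of the corresponding local stochastic matrices. If supp(z_{γ'}) = supp(z_γ), then the minimum nonzero entry of z_{γ'} is at least the minimum nonzero entry of z_γ. -/
/-!
Multiplying a vector `w` by `A_{ij}` replaces `w i` and `w j` by convex combinations of the two
and leaves every other entry alone. If `w ≥ 0` and the support does not change, then `w i ≠ 0`
forces `w j ≠ 0` (its new value contains the positive term `a_{ji} w_i`) and vice versa, so every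
nonzero new entry is either an old nonzero entry or a convex combination of two of them, hence
at least `min w`. Nonnegativity of `z_γ` comes from `P_γ` being row stochastic.
-/

open Matrix Finset

/-- The product `P_γ = A_{e_k} ⋯ A_{e_1}` of local stochastic matrices along a finite
sequence of edges `γ = e_1 … e_k`. -/
def seqProd {n : ℕ} (a : Fin n → Fin n → ℝ) :
    List (Fin n × Fin n) → Matrix (Fin n) (Fin n) ℝ
  | [] => 1
  | e :: t => seqProd a t * locMat a e.1 e.2

/-- The smallest nonzero entry of a vector. -/
noncomputable def minNZ {n : ℕ} (z : Fin n → ℝ) : ℝ :=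
  sInf {x : ℝ | x ≠ 0 ∧ ∃ i, z i = x}

section LocMat

variable {n : ℕ} (a : Fin n → Fin n → ℝ) {i j : Fin n}

lemma locMat_mulVec_apply_left (hij : i ≠ j) (w : Fin n → ℝ) :
    (locMat a i j *ᵥ w) i = (1 - a i j) * w i + a i j * w j := by
  simp [locMat, mulVec, dotProduct, ite_mul, sum_ite, filter_eq', filter_ne', hij.symm]

lemma locMat_mulVec_apply_right (hij : i ≠ j) (w : Fin n → ℝ) :
    (locMat a i j *ᵥ w) j = a j i * w i + (1 - a j i) * w j := by
  simp [locMat, mulVec, dotProduct, ite_mul, sum_ite, filter_eq', filter_ne', hij.symm]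

lemma locMat_mulVec_apply_of_ne {k : Fin n} (hki : k ≠ i) (hkj : k ≠ j) (w : Fin n → ℝ) :
    (locMat a i j *ᵥ w) k = w k := by
  simp [locMat, mulVec, dotProduct, hki, hkj]

lemma locMat_mem_rowStochastic (hij : i ≠ j) (haij : a i j ∈ Set.Icc 0 1)
    (haji : a j i ∈ Set.Icc 0 1) : locMat a i j ∈ rowStochastic ℝ (Fin n) := by
  refine mem_rowStochastic.2 ⟨fun k l => ?_, funext fun k => ?_⟩
  · simp only [locMat, of_apply]
    split_ifs <;> linarith [haij.1, haij.2, haji.1, haji.2]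
  · by_cases hki : k = i
    · subst hki; simp [locMat_mulVec_apply_left a hij]
    by_cases hkj : k = j
    · subst hkj; simp [locMat_mulVec_apply_right a hij]
    · simp [locMat_mulVec_apply_of_ne a hki hkj]

end LocMat

lemma seqProd_append {n : ℕ} (a : Fin n → Fin n → ℝ) (γ : List (Fin n × Fin n))
    (e : Fin n × Fin n) : seqProd a (γ ++ [e]) = locMat a e.1 e.2 * seqProd a γ := by
  induction γ with
  | nil => simp [seqProd]
  | cons x t ih => simp [seqProd, ih, Matrix.mul_assoc]

lemma seqProd_mem_rowStochastic {n : ℕ} (G : SimpleGraph (Fin n)) (a : Fin n → Fin n → ℝ)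
    (ha : ∀ i j, G.Adj i j → a i j ∈ Set.Icc 0 1) :
    ∀ γ : List (Fin n × Fin n), (∀ e ∈ γ, G.Adj e.1 e.2) →
      seqProd a γ ∈ rowStochastic ℝ (Fin n)
  | [], _ => one_mem _
  | e :: t, hγ =>
    have he := hγ e List.mem_cons_self
    mul_mem (seqProd_mem_rowStochastic G a ha t fun e' he' => hγ e' (List.mem_cons_of_mem e he'))
      (locMat_mem_rowStochastic a he.ne (ha _ _ he) (ha _ _ he.symm))

section MinNZ

variable {n : ℕ} {w : Fin n → ℝ}

lemma minNZ_le_of_ne_zero (hw : ∀ k, 0 ≤ w k) {k : Fin n} (hk : w k ≠ 0) : minNZ w ≤ w k :=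
  csInf_le ⟨0, by rintro _ ⟨-, l, rfl⟩; exact hw l⟩ ⟨hk, k, rfl⟩

lemma le_minNZ {c : ℝ} (hne : ∃ k, w k ≠ 0) (hc : ∀ k, w k ≠ 0 → c ≤ w k) :
    c ≤ minNZ w := by
  obtain ⟨k, hk⟩ := hne
  exact le_csInf ⟨w k, hk, k, rfl⟩ (by rintro _ ⟨hl, l, rfl⟩; exact hc l hl)

end MinNZ

section AveragingStep

variable {n : ℕ} (a : Fin n → Fin n → ℝ) {i j : Fin n} {w : Fin n → ℝ}

lemma ne_zero_iff_ne_zero_of_support_locMat_mulVec_eq (hij : i ≠ j)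
    (haij : a i j ∈ Set.Ioc 0 1) (haji : a j i ∈ Set.Ioc 0 1) (hw : ∀ k, 0 ≤ w k)
    (hsupp : Function.support (locMat a i j *ᵥ w) = Function.support w) :
    w i ≠ 0 ↔ w j ≠ 0 := by
  have hpos {k : Fin n} (hk : w k ≠ 0) : 0 < w k := (hw k).lt_of_ne' hk
  constructor <;> intro h
  · rw [← Function.mem_support, ← hsupp, Function.mem_support,
      locMat_mulVec_apply_right a hij]
    exact (add_pos_of_pos_of_nonneg (mul_pos haji.1 (hpos h))
      (mul_nonneg (sub_nonneg.2 haji.2) (hw j))).ne'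
  · rw [← Function.mem_support, ← hsupp, Function.mem_support,
      locMat_mulVec_apply_left a hij]
    exact (add_pos_of_nonneg_of_pos (mul_nonneg (sub_nonneg.2 haij.2) (hw i))
      (mul_pos haij.1 (hpos h))).ne'

lemma minNZ_le_locMat_mulVec_apply (hij : i ≠ j)
    (haij : a i j ∈ Set.Ioc 0 1) (haji : a j i ∈ Set.Ioc 0 1) (hw : ∀ k, 0 ≤ w k)
    (hsupp : Function.support (locMat a i j *ᵥ w) = Function.support w)
    {k : Fin n} (hk : (locMat a i j *ᵥ w) k ≠ 0) :
    minNZ w ≤ (locMat a i j *ᵥ w) k := by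
  have hpair := ne_zero_iff_ne_zero_of_support_locMat_mulVec_eq a hij haij haji hw hsupp
  have hwk : w k ≠ 0 := by rwa [← Function.mem_support, ← hsupp]
  have hconvex {s t : ℝ} (hs : 0 ≤ s) (ht : 0 ≤ t) (hst : s + t = 1) (hi : w i ≠ 0) :
      minNZ w ≤ s * w i + t * w j := by
    simpa only [smul_eq_mul, Set.mem_Ici] using convex_Ici (minNZ w)
      (minNZ_le_of_ne_zero hw hi) (minNZ_le_of_ne_zero hw (hpair.1 hi)) hs ht hst
  by_cases hki : k = i
  · rw [hki] at hwk ⊢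
    rw [locMat_mulVec_apply_left a hij]
    exact hconvex (sub_nonneg.2 haij.2) haij.1.le (sub_add_cancel 1 _) hwk
  by_cases hkj : k = j
  · rw [hkj] at hwk ⊢
    rw [locMat_mulVec_apply_right a hij]
    exact hconvex haji.1.le (sub_nonneg.2 haji.2) (add_sub_cancel _ 1) (hpair.2 hwk)
  · rw [locMat_mulVec_apply_of_ne a hki hkj]
    exact minNZ_le_of_ne_zero hw hwk

theorem minNZ_le_minNZ_locMat_mulVec (hij : i ≠ j)
    (haij : a i j ∈ Set.Ioc 0 1) (haji : a j i ∈ Set.Ioc 0 1) (hw : ∀ k, 0 ≤ w k)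
    (hsupp : Function.support (locMat a i j *ᵥ w) = Function.support w) :
    minNZ w ≤ minNZ (locMat a i j *ᵥ w) := by
  by_cases hne : ∃ k, (locMat a i j *ᵥ w) k ≠ 0
  · exact le_minNZ hne fun k hk => minNZ_le_locMat_mulVec_apply a hij haij haji hw hsupp hk
  · have hzero : locMat a i j *ᵥ w = 0 := funext (not_exists_not.1 hne)
    rw [hzero, Function.support_zero, eq_comm, Function.support_eq_empty_iff] at hsupp
    rw [hzero, hsupp]

end AveragingStep

theorem stmt8_general {n : ℕ} (G : SimpleGraph (Fin n))
    (a : Fin n → Fin n → ℝ) (ha : ∀ i j, G.Adj i j → a i j ∈ Set.Ioo (0:ℝ) 1)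
    (z : Fin n → ℝ) (hz : ∀ i, 0 ≤ z i)
    (γ : List (Fin n × Fin n)) (hγ : ∀ e ∈ γ, G.Adj e.1 e.2)
    (e : Fin n × Fin n) (he : G.Adj e.1 e.2)
    (hsupp : {i | (seqProd a (γ ++ [e])).mulVec z i ≠ 0}
           = {i | (seqProd a γ).mulVec z i ≠ 0}) :
    minNZ ((seqProd a γ).mulVec z) ≤ minNZ ((seqProd a (γ ++ [e])).mulVec z) := by
  have hP := seqProd_mem_rowStochastic G a (fun i j h => Set.Ioo_subset_Icc_self (ha i j h)) γ hγ
  rw [seqProd_append, ← mulVec_mulVec] at hsupp ⊢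
  exact minNZ_le_minNZ_locMat_mulVec a he.ne (Set.Ioo_subset_Ioc_self (ha _ _ he))
    (Set.Ioo_subset_Ioc_self (ha _ _ he.symm)) (nonneg_mulVec_of_mem_rowStochastic hP hz) hsupp

/-- If appending one more edge `e` to the sequence `γ` does not change the support of
`z_γ = P_γ z`, then the minimum nonzero entry does not decrease. -/
theorem stmt8 {n : ℕ} (G : SimpleGraph (Fin n)) (hGc : G.Connected)
    (a : Fin n → Fin n → ℝ) (ha : ∀ i j, G.Adj i j → a i j ∈ Set.Ioo (0:ℝ) 1)
    (z : Fin n → ℝ) (hz : ∀ i, 0 ≤ z i)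
    (γ : List (Fin n × Fin n)) (hγ : ∀ e ∈ γ, G.Adj e.1 e.2)
    (e : Fin n × Fin n) (he : G.Adj e.1 e.2)
    (hsupp : {i | (seqProd a (γ ++ [e])).mulVec z i ≠ 0}
           = {i | (seqProd a γ).mulVec z i ≠ 0}) :
    minNZ ((seqProd a γ).mulVec z) ≤ minNZ ((seqProd a (γ ++ [e])).mulVec z) :=
  stmt8_general G a ha z hz γ hγ e he hsupp
end

section
/- For any two n×n row-stochastic matrices P and Q, ‖PQ‖_S ≤ μ(P)·‖Q‖_S, where ‖A‖_S = max_j max_{i₁,i₂} |a_{i₁ j} − a_{i₂ j}| and μ(P) = (1/2) max_{i,j} ∑_k |p_{ik} − p_{jk}| is the coefficient of ergodicity. -/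
open Matrix Finset

/-- The semi-norm `‖A‖_S`: maximum column-wise spread of the entries. -/
noncomputable def sNorm {n : ℕ} (A : Matrix (Fin n) (Fin n) ℝ) : ℝ :=
  ⨆ j, ⨆ i₁, ⨆ i₂, |A i₁ j - A i₂ j|

/-- Hajnal's coefficient of ergodicity `μ(A)`. -/
noncomputable def ergCoef {n : ℕ} (A : Matrix (Fin n) (Fin n) ℝ) : ℝ :=
  (1 / 2) * ⨆ i, ⨆ j, ∑ k, |A i k - A j k|

private lemma core_ineq {n : ℕ} (d x : Fin n → ℝ) (hd : ∑ k, d k = 0)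
    (a b : Fin n) (hxa : ∀ k, x k ≤ x a) (hxb : ∀ k, x b ≤ x k) :
    |∑ k, d k * x k| ≤ (1 / 2) * (∑ k, |d k|) * (x a - x b) := by
  set dp : Fin n → ℝ := fun k => max (d k) 0 with hdp
  set dn : Fin n → ℝ := fun k => max (-d k) 0 with hdn
  have hdpn : ∀ k, d k = dp k - dn k := by
    intro k
    rcases le_total (d k) 0 with h | h
    · simp [hdp, hdn, max_eq_right h, max_eq_left (neg_nonneg.mpr h)]
    · simp [hdp, hdn, max_eq_left h, max_eq_right (neg_nonpos.mpr h)]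
  have habs : ∀ k, |d k| = dp k + dn k := by
    intro k
    rcases le_total (d k) 0 with h | h
    · simp [hdp, hdn, abs_of_nonpos h, max_eq_right h, max_eq_left (neg_nonneg.mpr h)]
    · simp [hdp, hdn, abs_of_nonneg h, max_eq_left h, max_eq_right (neg_nonpos.mpr h)]
  have hs : ∑ k, dp k = ∑ k, dn k := by
    have : ∑ k, (dp k - dn k) = 0 :=
      (Finset.sum_congr rfl (fun k _ => (hdpn k).symm)).trans hd
    rw [Finset.sum_sub_distrib] at this; linarith
  have hsum_abs : ∑ k, |d k| = 2 * ∑ k, dp k := by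
    rw [Finset.sum_congr rfl (fun k _ => habs k), Finset.sum_add_distrib, ← hs]; ring
  have hdp0 : ∀ k, 0 ≤ dp k := fun k => le_max_right _ _
  have hdn0 : ∀ k, 0 ≤ dn k := fun k => le_max_right _ _
  have hsplit : ∑ k, d k * x k = ∑ k, dp k * x k - ∑ k, dn k * x k := by
    rw [← Finset.sum_sub_distrib]
    exact Finset.sum_congr rfl (fun k _ => by rw [hdpn k]; ring)
  have hub : ∑ k, d k * x k ≤ (∑ k, dp k) * (x a - x b) := by
    rw [hsplit]
    have h1 : ∑ k, dp k * x k ≤ ∑ k, dp k * x a :=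
      Finset.sum_le_sum fun k _ => mul_le_mul_of_nonneg_left (hxa k) (hdp0 k)
    have h2 : ∑ k, dn k * x b ≤ ∑ k, dn k * x k :=
      Finset.sum_le_sum fun k _ => mul_le_mul_of_nonneg_left (hxb k) (hdn0 k)
    rw [← Finset.sum_mul] at h1
    rw [show ∑ k, dn k * x b = (∑ k, dn k) * x b from (Finset.sum_mul _ _ _).symm] at h2
    rw [← hs] at h2
    nlinarith [h1, h2]
  have hlb : -((∑ k, dp k) * (x a - x b)) ≤ ∑ k, d k * x k := by
    rw [hsplit]
    have h1 : ∑ k, dn k * x k ≤ ∑ k, dn k * x a :=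
      Finset.sum_le_sum fun k _ => mul_le_mul_of_nonneg_left (hxa k) (hdn0 k)
    have h2 : ∑ k, dp k * x b ≤ ∑ k, dp k * x k :=
      Finset.sum_le_sum fun k _ => mul_le_mul_of_nonneg_left (hxb k) (hdp0 k)
    rw [← Finset.sum_mul] at h1
    rw [show ∑ k, dp k * x b = (∑ k, dp k) * x b from (Finset.sum_mul _ _ _).symm] at h2
    rw [← hs] at h1
    nlinarith [h1, h2]
  rw [hsum_abs]
  have : |∑ k, d k * x k| ≤ (∑ k, dp k) * (x a - x b) := abs_le.mpr ⟨hlb, hub⟩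
  linarith

/-- For row-stochastic matrices `P, Q`, `‖PQ‖_S ≤ μ(P) ‖Q‖_S`. -/
theorem stmt10 {n : ℕ} (P Q : Matrix (Fin n) (Fin n) ℝ)
    (hP : ∀ i j, 0 ≤ P i j) (hProw : ∀ i, ∑ j, P i j = 1)
    (hQ : ∀ i j, 0 ≤ Q i j) (hQrow : ∀ i, ∑ j, Q i j = 1) :
    sNorm (P * Q) ≤ ergCoef P * sNorm Q := by
  rcases Nat.eq_zero_or_pos n with hn | hn
  · subst hn
    simp [sNorm, ergCoef, Real.iSup_of_isEmpty]
  haveI : NeZero n := ⟨hn.ne'⟩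
  have bdd : ∀ (f : Fin n → ℝ), BddAbove (Set.range f) :=
    fun f => (Set.finite_range f).bddAbove
  -- sNorm Q ≥ 0 and ergCoef P ≥ 0
  have hsQ : ∀ a b j, |Q a j - Q b j| ≤ sNorm Q := by
    intro a b j
    calc |Q a j - Q b j| ≤ ⨆ i₂, |Q a j - Q i₂ j| :=
          le_ciSup (f := fun i₂ => |Q a j - Q i₂ j|) (bdd _) b
      _ ≤ ⨆ i₁, ⨆ i₂, |Q i₁ j - Q i₂ j| :=
          le_ciSup (f := fun i₁ => ⨆ i₂, |Q i₁ j - Q i₂ j|) (bdd _) a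
      _ ≤ sNorm Q :=
          le_ciSup (f := fun j => ⨆ i₁, ⨆ i₂, |Q i₁ j - Q i₂ j|) (bdd _) j
  have herg : ∀ i₁ i₂, (1/2) * ∑ k, |P i₁ k - P i₂ k| ≤ ergCoef P := by
    intro i₁ i₂
    have : ∑ k, |P i₁ k - P i₂ k| ≤ ⨆ i, ⨆ j, ∑ k, |P i k - P j k| :=
      le_trans (le_ciSup (f := fun j => ∑ k, |P i₁ k - P j k|) (bdd _) i₂)
        (le_ciSup (f := fun i => ⨆ j, ∑ k, |P i k - P j k|) (bdd _) i₁)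
    unfold ergCoef; linarith
  rw [sNorm]
  refine ciSup_le fun j => ciSup_le fun i₁ => ciSup_le fun i₂ => ?_
  -- pick max and min of column j of Q
  obtain ⟨a, -, ha⟩ := Finset.exists_max_image Finset.univ (fun k => Q k j) ⟨⟨0, hn⟩, Finset.mem_univ _⟩
  obtain ⟨b, -, hb⟩ := Finset.exists_min_image Finset.univ (fun k => Q k j) ⟨⟨0, hn⟩, Finset.mem_univ _⟩
  have hd : ∑ k, (P i₁ k - P i₂ k) = 0 := by
    rw [Finset.sum_sub_distrib, hProw, hProw]; ring
  have hkey := core_ineq (fun k => P i₁ k - P i₂ k) (fun k => Q k j) hd a b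
    (fun k => ha k (Finset.mem_univ _)) (fun k => hb k (Finset.mem_univ _))
  have heq : (P * Q) i₁ j - (P * Q) i₂ j = ∑ k, (P i₁ k - P i₂ k) * Q k j := by
    simp [Matrix.mul_apply, ← Finset.sum_sub_distrib, sub_mul]
  rw [heq]
  refine hkey.trans ?_
  have h1 : (0:ℝ) ≤ (1/2) * ∑ k, |P i₁ k - P i₂ k| := by
    have : (0:ℝ) ≤ ∑ k, |P i₁ k - P i₂ k| := Finset.sum_nonneg fun k _ => abs_nonneg _
    linarith
  have h2 : Q a j - Q b j ≤ sNorm Q :=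
    le_trans (le_abs_self _) (hsQ a b j)
  have h3 : (0:ℝ) ≤ Q a j - Q b j := by
    have := hb a (Finset.mem_univ _); linarith
  calc (1/2) * (∑ k, |P i₁ k - P i₂ k|) * (Q a j - Q b j)
      ≤ ergCoef P * sNorm Q := mul_le_mul (herg i₁ i₂) h2 h3 (le_trans h1 (herg i₁ i₂))
end

section
/- For any scrambling stochastic matrix A (no two rows have disjoint supports), the coefficient of ergodicity satisfies μ(A) ≤ 1 − min A, where min A denotes the smallest nonzero entry of A. -/
open Matrix Finset

/-- The smallest nonzero entry of a matrix. -/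
noncomputable def matMinNZ {n : ℕ} (A : Matrix (Fin n) (Fin n) ℝ) : ℝ :=
  sInf {x : ℝ | x ≠ 0 ∧ ∃ i j, A i j = x}

/-- For any scrambling row-stochastic matrix `A`, `μ(A) ≤ 1 - min A`. -/
theorem stmt11 {n : ℕ} (A : Matrix (Fin n) (Fin n) ℝ)
    (hA : ∀ i j, 0 ≤ A i j) (hrow : ∀ i, ∑ j, A i j = 1)
    (hscr : ∀ i j : Fin n, ∃ k, 0 < A i k ∧ 0 < A j k) :
    ergCoef A ≤ 1 - matMinNZ A := by
  rcases Nat.eq_zero_or_pos n with hn | hn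
  · subst hn
    have h1 : ergCoef A = 0 := by
      simp [ergCoef, Real.iSup_of_isEmpty]
    have h2 : matMinNZ A = 0 := by
      have : {x : ℝ | x ≠ 0 ∧ ∃ i j, A i j = x} = ∅ := by
        ext x; simp
      simp [matMinNZ, this, Real.sInf_empty]
    rw [h1, h2]; norm_num
  · set m := matMinNZ A with hm
    have hbdd : BddBelow {x : ℝ | x ≠ 0 ∧ ∃ i j, A i j = x} := by
      refine ⟨0, ?_⟩; rintro x ⟨hx, i, j, rfl⟩; exact hA i j
    have hm_le : ∀ i j, A i j ≠ 0 → m ≤ A i j := by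
      intro i j h
      exact csInf_le hbdd ⟨h, i, j, rfl⟩
    have hm1 : m ≤ 1 := by
      have i0 : Fin n := ⟨0, hn⟩
      obtain ⟨k, hk, _⟩ := hscr i0 i0
      have h1 : A i0 k ≤ 1 := by
        rw [← hrow i0]
        exact Finset.single_le_sum (fun k _ => hA i0 k) (mem_univ k)
      exact (hm_le i0 k (ne_of_gt hk)).trans h1
    have key : ∀ i j, ∑ k, |A i k - A j k| ≤ 2 - 2 * m := by
      intro i j
      obtain ⟨k0, h1, h2⟩ := hscr i j
      have hmin : m ≤ min (A i k0) (A j k0) := by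
        rcases le_total (A i k0) (A j k0) with h | h
        · rw [min_eq_left h]; exact hm_le i k0 (ne_of_gt h1)
        · rw [min_eq_right h]; exact hm_le j k0 (ne_of_gt h2)
      have hsum : m ≤ ∑ k, min (A i k) (A j k) :=
        hmin.trans (Finset.single_le_sum
          (fun k _ => le_min (hA i k) (hA j k)) (mem_univ k0))
      have heq : ∑ k, |A i k - A j k|
          = 2 - 2 * ∑ k, min (A i k) (A j k) := by
        have hpt : ∀ k, |A i k - A j k|
            = A i k + A j k - 2 * min (A i k) (A j k) := by
          intro k
          rcases le_total (A i k) (A j k) with h | h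
          · rw [min_eq_left h, abs_of_nonpos (sub_nonpos.2 h)]; ring
          · rw [min_eq_right h, abs_of_nonneg (sub_nonneg.2 h)]; ring
        simp only [hpt]
        rw [Finset.sum_sub_distrib, Finset.sum_add_distrib, hrow i, hrow j,
          ← Finset.mul_sum]
        ring
      linarith
    have hsup : (⨆ i, ⨆ j, ∑ k, |A i k - A j k|) ≤ 2 - 2 * m :=
      Real.iSup_le (fun i => Real.iSup_le (fun j => key i j) (by linarith))
        (by linarith)
    have : ergCoef A ≤ (1 / 2) * (2 - 2 * m) := by
      rw [ergCoef]
      nlinarith [hsup]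
    linarith
end

section
/- The product of any ℓ ≥ ⌊n/2⌋ irreducible n×n row-stochastic matrices, each with strictly positive diagonal entries, is a scrambling matrix. -/
/-!
Let `S_t(i)` be the support of row `i` of the product of the first `t` factors. A positive
diagonal in the next factor gives `S_t(i) ⊆ S_{t+1}(i)`, and its irreducibility gives an edge
leaving `S_t(i)` whenever `S_t(i)` is a proper subset, so `#S_t(i) ≥ min(n, t + 1)`. After
`ℓ ≥ ⌊n/2⌋` factors every row support has more than `n / 2` elements, so any two of them meet.
-/

open Matrix Finset

theorem Relation.ReflTransGen.exists_rel_not_of {α : Type*} {r : α → α → Prop} {p : α → Prop}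
    {a b : α} (h : Relation.ReflTransGen r a b) (ha : ¬ p a) (hb : p b) :
    ∃ x y, r x y ∧ ¬ p x ∧ p y := by
  induction h with
  | refl => exact absurd hb ha
  | @tail c d _ hcd ih =>
    by_cases hc : p c
    · exact ih hc
    · exact ⟨c, d, hcd, hc, hb⟩

namespace Matrix

theorem list_prod_nonneg {ι R : Type*} [Fintype ι] [DecidableEq ι] [Semiring R] [PartialOrder R]
    [IsOrderedRing R] {L : List (Matrix ι ι R)} (h : ∀ M ∈ L, ∀ i j, 0 ≤ M i j) (i j : ι) :
    0 ≤ L.prod i j := by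
  induction L generalizing i with
  | nil => by_cases hij : i = j <;> simp [hij]
  | cons M L ih =>
    rw [List.prod_cons, mul_apply]
    exact sum_nonneg fun m _ ↦ mul_nonneg (h M (by simp) i m)
      (ih (fun N hN ↦ h N (List.mem_cons_of_mem M hN)) m)

theorem mul_apply_ne_zero_iff {l m n R : Type*} [Fintype m] [Semiring R] [PartialOrder R]
    [IsOrderedRing R] [NoZeroDivisors R] {A : Matrix l m R} {B : Matrix m n R}
    (hA : ∀ i j, 0 ≤ A i j) (hB : ∀ i j, 0 ≤ B i j) (i : l) (k : n) :
    (A * B) i k ≠ 0 ↔ ∃ j, A i j ≠ 0 ∧ B j k ≠ 0 := by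
  rw [mul_apply, Ne, sum_eq_zero_iff_of_nonneg fun j _ ↦ mul_nonneg (hA i j) (hB j k)]
  simp only [mem_univ, true_implies, mul_eq_zero, not_forall, not_or]

section RowSupport

variable {ι R : Type*} [Fintype ι]

open scoped Classical in
/-- The in-neighbourhood of `i` in the digraph of `A`, which has an edge `k → i` iff `A i k ≠ 0`. -/
noncomputable def rowSupport [Zero R] (A : Matrix ι ι R) (i : ι) : Finset ι :=
  {k | A i k ≠ 0}

@[simp]
theorem mem_rowSupport [Zero R] {A : Matrix ι ι R} {i k : ι} :
    k ∈ rowSupport A i ↔ A i k ≠ 0 := by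
  simp [rowSupport]

variable [Semiring R] [PartialOrder R] [IsOrderedRing R] [NoZeroDivisors R]
  {A B : Matrix ι ι R} {i : ι}

theorem mem_rowSupport_mul (hA : ∀ i j, 0 ≤ A i j) (hB : ∀ i j, 0 ≤ B i j) {k : ι} :
    k ∈ rowSupport (A * B) i ↔ ∃ j ∈ rowSupport A i, B j k ≠ 0 := by
  simp only [mem_rowSupport, mul_apply_ne_zero_iff hA hB]

theorem rowSupport_subset_rowSupport_mul (hA : ∀ i j, 0 ≤ A i j) (hB : ∀ i j, 0 ≤ B i j)
    (hBdiag : ∀ j, B j j ≠ 0) : rowSupport A i ⊆ rowSupport (A * B) i :=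
  fun k hk ↦ (mem_rowSupport_mul hA hB).2 ⟨k, hk, hBdiag k⟩

theorem exists_mem_rowSupport_mul_notMem (hA : ∀ i j, 0 ≤ A i j) (hB : ∀ i j, 0 ≤ B i j)
    (hBirr : ∀ j k, Relation.ReflTransGen (fun x y ↦ B y x ≠ 0) j k)
    {j k : ι} (hj : j ∈ rowSupport A i) (hk : k ∉ rowSupport A i) :
    ∃ x ∈ rowSupport (A * B) i, x ∉ rowSupport A i := by
  obtain ⟨x, y, hxy, hx, hy⟩ := (hBirr k j).exists_rel_not_of hk hj
  exact ⟨x, (mem_rowSupport_mul hA hB).2 ⟨y, hy, hxy⟩, hx⟩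

theorem min_card_le_card_rowSupport_mul (hA : ∀ i j, 0 ≤ A i j) (hB : ∀ i j, 0 ≤ B i j)
    (hBdiag : ∀ j, B j j ≠ 0) (hBirr : ∀ j k, Relation.ReflTransGen (fun x y ↦ B y x ≠ 0) j k)
    (hne : (rowSupport A i).Nonempty) :
    min (Fintype.card ι) (#(rowSupport A i) + 1) ≤ #(rowSupport (A * B) i) := by
  have hsub := rowSupport_subset_rowSupport_mul (i := i) hA hB hBdiag
  by_cases hfull : rowSupport A i = univ
  · rw [← card_univ, ← hfull]
    exact (min_le_left _ _).trans (card_le_card hsub)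
  obtain ⟨k, hk⟩ := not_forall.1 (mt eq_univ_of_forall hfull)
  obtain ⟨j, hj⟩ := hne
  obtain ⟨x, hx, hxA⟩ := exists_mem_rowSupport_mul_notMem hA hB hBirr hj hk
  classical
  calc min (Fintype.card ι) (#(rowSupport A i) + 1)
      ≤ #(insert x (rowSupport A i)) := by rw [card_insert_of_notMem hxA]; exact min_le_right _ _
    _ ≤ #(rowSupport (A * B) i) := card_le_card (insert_subset hx hsub)

theorem min_card_le_card_rowSupport_list_prod [DecidableEq ι] [Nontrivial R]
    (L : List (Matrix ι ι R))
    (hnonneg : ∀ M ∈ L, ∀ i j, 0 ≤ M i j) (hdiag : ∀ M ∈ L, ∀ i, M i i ≠ 0)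
    (hirr : ∀ M ∈ L, ∀ i j, Relation.ReflTransGen (fun x y ↦ M y x ≠ 0) i j) (i : ι) :
    min (Fintype.card ι) (L.length + 1) ≤ #(rowSupport L.prod i) := by
  induction L using List.reverseRecOn with
  | nil =>
    refine min_le_right _ _ |>.trans (one_le_card.2 ⟨i, ?_⟩)
    simp
  | append_singleton L M ih =>
    simp only [List.forall_mem_append, List.forall_mem_singleton] at hnonneg hdiag hirr
    have hL := ih hnonneg.1 hdiag.1 hirr.1
    have hne : (rowSupport L.prod i).Nonempty :=
      card_pos.1 <| (Nat.lt_min.2 ⟨Fintype.card_pos_iff.2 ⟨i⟩, L.length.succ_pos⟩).trans_le hL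
    rw [List.prod_append, List.prod_singleton, List.length_append, List.length_singleton]
    refine le_trans ?_ (min_card_le_card_rowSupport_mul (list_prod_nonneg hnonneg.1) hnonneg.2
      hdiag.2 hirr.2 hne)
    omega

end RowSupport

end Matrix

theorem stmt12_general {n : ℕ} (L : List (Matrix (Fin n) (Fin n) ℝ))
    (hlen : n / 2 ≤ L.length)
    (hnonneg : ∀ M ∈ L, ∀ i j, 0 ≤ M i j)
    (hdiag : ∀ M ∈ L, ∀ i, 0 < M i i)
    (hirr : ∀ M ∈ L, ∀ i j : Fin n, Relation.ReflTransGen (fun x y => M y x ≠ 0) i j) :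
    ∀ i j : Fin n, ∃ k, L.prod i k ≠ 0 ∧ L.prod j k ≠ 0 := by
  intro i j
  have hcard (i : Fin n) : min n (L.length + 1) ≤ #(rowSupport L.prod i) := by
    simpa using min_card_le_card_rowSupport_list_prod L hnonneg
      (fun M hM i ↦ (hdiag M hM i).ne') hirr i
  have hsum : #(univ : Finset (Fin n)) < #(rowSupport L.prod i) + #(rowSupport L.prod j) := by
    have := hcard i
    have := hcard j
    have := i.pos
    rw [card_univ, Fintype.card_fin]
    omega
  obtain ⟨k, hk⟩ := inter_nonempty_of_card_lt_card_add_card (subset_univ _) (subset_univ _) hsum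
  simp only [mem_inter, mem_rowSupport] at hk
  exact ⟨k, hk⟩

/-- The product of any `ℓ ≥ ⌊n/2⌋` irreducible `n×n` row-stochastic matrices with
strictly positive diagonal entries is a scrambling matrix. Irreducibility is stated
as strong connectivity of the associated digraph (edge from `v_j` to `v_i` when the
`(i,j)` entry is nonzero), and scrambling means no two rows have disjoint supports. -/
theorem stmt12 {n : ℕ} (L : List (Matrix (Fin n) (Fin n) ℝ))
    (hlen : n / 2 ≤ L.length)
    (hnonneg : ∀ M ∈ L, ∀ i j, 0 ≤ M i j)
    (hrow : ∀ M ∈ L, ∀ i, ∑ j, M i j = 1)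
    (hdiag : ∀ M ∈ L, ∀ i, 0 < M i i)
    (hirr : ∀ M ∈ L, ∀ i j : Fin n, Relation.ReflTransGen (fun x y => M y x ≠ 0) i j) :
    ∀ i j : Fin n, ∃ k, L.prod i k ≠ 0 ∧ L.prod j k ≠ 0 :=
  stmt12_general L hlen hnonneg hdiag hirr
end

section
/- The composition of any ⌊n/2⌋ or more strongly connected digraphs on the same n nodes, each having self-loops at all nodes, is neighbor-shared (any two distinct nodes have a common in-neighbor). -/
open Classical Finset

/-- Composition of a list of digraphs (given as relations) on a common node set:
`v_i v_j` is an edge of the composition `G_q ∘ G_p` whenever there is `v_k` with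
`v_i v_k` an edge of `G_p` and `v_k v_j` an edge of `G_q`. -/
def compAll {n : ℕ} (L : List (Fin n → Fin n → Prop)) : Fin n → Fin n → Prop :=
  L.foldr (fun r s x z => ∃ y, r x y ∧ s y z) Eq

/-- A digraph is neighbor-shared if any two distinct nodes have a common in-neighbor. -/
def NeighborShared {n : ℕ} (C : Fin n → Fin n → Prop) : Prop :=
  ∀ i j : Fin n, i ≠ j → ∃ k, C k i ∧ C k j

lemma compAll_refl {n : ℕ} (L : List (Fin n → Fin n → Prop))
    (hself : ∀ g ∈ L, ∀ i, g i i) (i : Fin n) : compAll L i i := by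
  induction L with
  | nil => rfl
  | cons r L ih =>
      exact ⟨i, hself r (by simp) i, ih (fun g hg => hself g (by simp [hg]))⟩

lemma cross_edge {n : ℕ} (g : Fin n → Fin n → Prop)
    (hconn : ∀ i j : Fin n, Relation.ReflTransGen g i j)
    (S : Finset (Fin n)) (hS : S.Nonempty) (hne : S ≠ Finset.univ) :
    ∃ x ∉ S, ∃ y ∈ S, g x y := by
  obtain ⟨b, hb⟩ := hS
  have : ∃ a, a ∉ S := by
    by_contra h
    push_neg at h
    exact hne (Finset.eq_univ_iff_forall.2 h)
  obtain ⟨a, ha⟩ := this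
  have hpath := hconn a b
  clear hne
  induction hpath using Relation.ReflTransGen.head_induction_on with
  | refl => exact absurd hb ha
  | head hac _ ih =>
      rename_i a' c _
      by_cases hc : c ∈ S
      · exact ⟨a', ha, c, hc, hac⟩
      · exact ih hc

lemma card_reach {n : ℕ} (L : List (Fin n → Fin n → Prop))
    (hself : ∀ g ∈ L, ∀ i, g i i)
    (hconn : ∀ g ∈ L, ∀ i j : Fin n, Relation.ReflTransGen g i j) (i : Fin n) :
    min n (L.length + 1) ≤ (Finset.univ.filter (fun k => compAll L k i)).card := by
  induction L with
  | nil =>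
      have hi : i ∈ Finset.univ.filter (fun k => compAll ([] : List (Fin n → Fin n → Prop)) k i) := by
        simp only [Finset.mem_filter, Finset.mem_univ, true_and]; rfl
      have h1 : 1 ≤ (Finset.univ.filter (fun k => compAll ([] : List (Fin n → Fin n → Prop)) k i)).card :=
        Finset.card_pos.2 ⟨i, hi⟩
      have hn : 1 ≤ n := i.pos
      simp only [List.length_nil]
      omega
  | cons r L ih =>
      have hself' : ∀ g ∈ L, ∀ i, g i i := fun g hg => hself g (by simp [hg])
      have hconn' : ∀ g ∈ L, ∀ i j : Fin n, Relation.ReflTransGen g i j :=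
        fun g hg => hconn g (by simp [hg])
      set S := Finset.univ.filter (fun k => compAll L k i) with hSdef
      set T := Finset.univ.filter (fun k => compAll (r :: L) k i) with hTdef
      have hsub : S ⊆ T := by
        intro k hk
        simp only [hSdef, Finset.mem_filter] at hk
        simp only [hTdef, Finset.mem_filter]
        exact ⟨Finset.mem_univ k, ⟨k, hself r (by simp) k, hk.2⟩⟩
      have hSne : S.Nonempty := ⟨i, by simp [hSdef, compAll_refl L hself' i]⟩
      have hS := ih hself' hconn'
      by_cases hfull : S = Finset.univ
      · have : T = Finset.univ := Finset.eq_univ_iff_forall.2 fun k =>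
          hsub (by rw [hfull]; exact Finset.mem_univ k)
        rw [this, Finset.card_univ, Fintype.card_fin]
        exact Nat.min_le_left _ _
      · obtain ⟨x, hx, y, hy, hxy⟩ := cross_edge r (hconn r (by simp)) S hSne hfull
        have hxT : x ∈ T := by
          simp only [hSdef, Finset.mem_filter] at hy
          simp only [hTdef, Finset.mem_filter]
          exact ⟨Finset.mem_univ x, ⟨y, hxy, hy.2⟩⟩
        have hsub2 : insert x S ⊆ T := Finset.insert_subset hxT hsub
        have hcard : S.card + 1 ≤ T.card := by
          have := Finset.card_le_card hsub2
          rwa [Finset.card_insert_of_notMem hx] at this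
        have hTn : T.card ≤ n := by
          simpa using Finset.card_le_card (Finset.subset_univ T)
        simp only [List.length_cons]
        omega

/-- The composition of any `⌊n/2⌋` or more strongly connected digraphs on the same
`n` nodes, each with self-loops at all nodes, is neighbor-shared. -/
theorem stmt13 {n : ℕ} (L : List (Fin n → Fin n → Prop))
    (hlen : n / 2 ≤ L.length)
    (hself : ∀ g ∈ L, ∀ i, g i i)
    (hconn : ∀ g ∈ L, ∀ i j : Fin n, Relation.ReflTransGen g i j) :
    NeighborShared (compAll L) := by
  intro i j hij
  have hn : 1 ≤ n := i.pos
  have hm : min n (n / 2 + 1) = n / 2 + 1 := min_eq_right (by omega)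
  have hmono : min n (n / 2 + 1) ≤ min n (L.length + 1) := min_le_min le_rfl (by omega)
  have h1 : n / 2 + 1 ≤ (Finset.univ.filter (fun k => compAll L k i)).card := by
    have := card_reach L hself hconn i; omega
  have h2 : n / 2 + 1 ≤ (Finset.univ.filter (fun k => compAll L k j)).card := by
    have := card_reach L hself hconn j; omega
  set Bi := Finset.univ.filter (fun k => compAll L k i) with hBi
  set Bj := Finset.univ.filter (fun k => compAll L k j) with hBj
  have hunion : (Bi ∪ Bj).card ≤ n := by
    simpa using Finset.card_le_card (Finset.subset_univ (Bi ∪ Bj))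
  have hkey : 1 ≤ (Bi ∩ Bj).card := by
    have := Finset.card_union_add_card_inter Bi Bj
    omega
  obtain ⟨k, hk⟩ := Finset.card_pos.1 hkey
  simp only [hBi, hBj, Finset.mem_inter, Finset.mem_filter] at hk
  exact ⟨k, hk.1.2, hk.2.2⟩
end

section
/- If the local stochastic matrices A_{ij} are holonomic for the connected graph G and γ is an infinite m-spanning sequence of edges, then ‖P_{γ(t:0)}‖_S ≤ (1−ε)^{t/(m⌊n/2⌋) − 1} for all t ≥ 1, where ε = a̲^{n−1}. -/
open Matrix Finset

/-- The left-ordered product `P_{γ(t:0)} = A_{e_t} ⋯ A_{e_1}` along an infinite edge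
sequence `γ`. -/
def Pseq {n : ℕ} (a : Fin n → Fin n → ℝ) (γ : ℕ → Fin n × Fin n) :
    ℕ → Matrix (Fin n) (Fin n) ℝ
  | 0 => 1
  | t + 1 => locMat a (γ t).1 (γ t).2 * Pseq a γ t

/-- The string `γ(s), …, γ(s+l-1)` of the edge sequence `γ` is spanning: the edges
appearing in it form a connected spanning subgraph (i.e. cover a spanning tree). -/
def SpanningSeg {n : ℕ} (γ : ℕ → Fin n × Fin n) (s l : ℕ) : Prop :=
  (SimpleGraph.fromRel fun i j =>
      ∃ t, s ≤ t ∧ t < s + l ∧ (γ t = (i, j) ∨ γ t = (j, i))).Connected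

/-- An infinite edge sequence is spanning: it contains infinitely many disjoint
finite spanning strings. -/
def InfSpanning {n : ℕ} (γ : ℕ → Fin n × Fin n) : Prop :=
  ∀ t : ℕ, ∃ s l : ℕ, t ≤ s ∧ SpanningSeg γ s l

namespace S14

open Matrix Finset

variable {n : ℕ}

lemma sum_pair {u v : Fin n} (huv : u ≠ v) (p q : ℝ) (f : Fin n → ℝ) :
    ∑ k, (if k = u then p else if k = v then q else 0) * f k = p * f u + q * f v := by
  have h : ∀ k : Fin n, (if k = u then p else if k = v then q else 0) * f k
      = (if k = u then p * f u else 0) + (if k = v then q * f v else 0) := by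
    intro k
    by_cases hk : k = u
    · subst hk
      rw [if_pos rfl, if_pos rfl, if_neg huv, add_zero]
    · by_cases hk' : k = v
      · subst hk'
        rw [if_neg hk, if_pos rfl, if_neg hk, if_pos rfl, zero_add]
      · rw [if_neg hk, if_neg hk', zero_mul, if_neg hk, if_neg hk', add_zero]
  rw [Finset.sum_congr rfl (fun k _ => h k), Finset.sum_add_distrib]
  rw [Finset.sum_ite_eq' Finset.univ u, Finset.sum_ite_eq' Finset.univ v]
  simp

lemma locMat_mul_other {a : Fin n → Fin n → ℝ} {u v x : Fin n}
    (M : Matrix (Fin n) (Fin n) ℝ) (hx : x ≠ u) (hx' : x ≠ v) (c : Fin n) :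
    (locMat a u v * M) x c = M x c := by
  rw [Matrix.mul_apply]
  have h : ∀ k : Fin n, locMat a u v x k * M k c = if k = x then M x c else 0 := by
    intro k
    show (if x = u then _ else if x = v then _ else if x = k then (1:ℝ) else 0) * M k c = _
    rw [if_neg hx, if_neg hx']
    by_cases hk : x = k
    · subst hk; rw [if_pos rfl, if_pos rfl, one_mul]
    · rw [if_neg hk, if_neg (fun h => hk h.symm), zero_mul]
  rw [Finset.sum_congr rfl (fun k _ => h k), Finset.sum_ite_eq' Finset.univ x]
  simp

lemma locMat_mul_left {a : Fin n → Fin n → ℝ} {u v : Fin n} (huv : u ≠ v)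
    (M : Matrix (Fin n) (Fin n) ℝ) (c : Fin n) :
    (locMat a u v * M) u c = (1 - a u v) * M u c + a u v * M v c := by
  rw [Matrix.mul_apply]
  have h : ∀ k : Fin n, locMat a u v u k
      = if k = u then (1 - a u v) else if k = v then a u v else 0 := by
    intro k
    show (if u = u then (if k = u then (1:ℝ) - a u v else if k = v then a u v else 0)
      else _) = _
    rw [if_pos rfl]
  calc ∑ k, locMat a u v u k * M k c
      = ∑ k, (if k = u then (1 - a u v) else if k = v then a u v else 0) * M k c :=
        Finset.sum_congr rfl (fun k _ => by rw [h k])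
    _ = (1 - a u v) * M u c + a u v * M v c := sum_pair huv _ _ _

lemma locMat_mul_right {a : Fin n → Fin n → ℝ} {u v : Fin n} (huv : u ≠ v)
    (M : Matrix (Fin n) (Fin n) ℝ) (c : Fin n) :
    (locMat a u v * M) v c = a v u * M u c + (1 - a v u) * M v c := by
  rw [Matrix.mul_apply]
  have h : ∀ k : Fin n, locMat a u v v k
      = if k = u then a v u else if k = v then (1 - a v u) else 0 := by
    intro k
    show (if v = u then _ else if v = v then (if k = u then a v u else if k = v then
      (1:ℝ) - a v u else 0) else _) = _
    rw [if_neg (Ne.symm huv), if_pos rfl]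
  calc ∑ k, locMat a u v v k * M k c
      = ∑ k, (if k = u then a v u else if k = v then (1 - a v u) else 0) * M k c :=
        Finset.sum_congr rfl (fun k _ => by rw [h k])
    _ = a v u * M u c + (1 - a v u) * M v c := sum_pair huv _ _ _



variable (a : Fin n → Fin n → ℝ) (γ : ℕ → Fin n × Fin n) (abar : ℝ)

/-- Product of the local matrices for steps `s, s+1, …, s+t-1`. -/
def Qw (s : ℕ) : ℕ → Matrix (Fin n) (Fin n) ℝ
  | 0 => 1
  | t+1 => locMat a (γ (s+t)).1 (γ (s+t)).2 * Qw s t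

/-- Support sets evolving along the window. -/
def Fset (s : ℕ) : ℕ → Fin n → Finset (Fin n)
  | 0, x => {x}
  | t+1, x => if x = (γ (s+t)).1 ∨ x = (γ (s+t)).2
      then Fset s t (γ (s+t)).1 ∪ Fset s t (γ (s+t)).2 else Fset s t x

noncomputable def psi (s t : ℕ) (x y : Fin n) : ℝ :=
  ∑ j, min (Qw a γ s t x j) (Qw a γ s t y j)

def qc (s t : ℕ) (x y : Fin n) : ℕ :=
  (Finset.univ.filter fun z => z ≠ x ∧ z ≠ y ∧
    ((Fset γ s t z ∩ Fset γ s t x) = ∅ ∨ (Fset γ s t z ∩ Fset γ s t y) = ∅)).card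

section ctx

variable {a : Fin n → Fin n → ℝ} {γ : ℕ → Fin n × Fin n} {abar : ℝ}
variable (hα : 0 < abar)
variable (hedge : ∀ t, (γ t).1 ≠ (γ t).2 ∧ abar ≤ a (γ t).1 (γ t).2 ∧
    abar ≤ 1 - a (γ t).1 (γ t).2 ∧ abar ≤ a (γ t).2 (γ t).1 ∧
    abar ≤ 1 - a (γ t).2 (γ t).1)

include hα hedge

lemma Qw_nonneg (s t : ℕ) : ∀ x j, 0 ≤ Qw a γ s t x j := by
  induction t with
  | zero =>
    intro x j
    simp only [Qw, Matrix.one_apply]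
    split <;> norm_num
  | succ t ih =>
    intro x j
    obtain ⟨hne, h1, h2, h3, h4⟩ := hedge (s+t)
    show 0 ≤ (locMat a (γ (s+t)).1 (γ (s+t)).2 * Qw a γ s t) x j
    by_cases hx : x = (γ (s+t)).1
    · subst hx
      rw [locMat_mul_left hne]
      exact add_nonneg (mul_nonneg (le_trans hα.le h2) (ih _ j))
        (mul_nonneg (le_trans hα.le h1) (ih _ j))
    · by_cases hx' : x = (γ (s+t)).2
      · subst hx'
        rw [locMat_mul_right hne]
        exact add_nonneg (mul_nonneg (le_trans hα.le h3) (ih _ j))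
          (mul_nonneg (le_trans hα.le h4) (ih _ j))
      · rw [locMat_mul_other _ hx hx']; exact ih x j

omit hα in
lemma Qw_rowsum (s t : ℕ) : ∀ x, ∑ j, Qw a γ s t x j = 1 := by
  induction t with
  | zero =>
    intro x
    simp [Qw, Matrix.one_apply]
  | succ t ih =>
    intro x
    obtain ⟨hne, h1, h2, h3, h4⟩ := hedge (s+t)
    show ∑ j, (locMat a (γ (s+t)).1 (γ (s+t)).2 * Qw a γ s t) x j = 1
    by_cases hx : x = (γ (s+t)).1
    · subst hx
      simp only [locMat_mul_left hne]
      rw [Finset.sum_add_distrib, ← Finset.mul_sum, ← Finset.mul_sum, ih, ih]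
      ring
    · by_cases hx' : x = (γ (s+t)).2
      · subst hx'
        simp only [locMat_mul_right hne]
        rw [Finset.sum_add_distrib, ← Finset.mul_sum, ← Finset.mul_sum, ih, ih]
        ring
      · simp only [locMat_mul_other _ hx hx']
        exact ih x

omit hα in
lemma Qw_combo (s t : ℕ) {x : Fin n} (hx : x = (γ (s+t)).1 ∨ x = (γ (s+t)).2) :
    ∃ c₁ c₂ : ℝ, abar ≤ c₁ ∧ abar ≤ c₂ ∧ c₁ + c₂ = 1 ∧
      ∀ j, Qw a γ s (t+1) x j
        = c₁ * Qw a γ s t (γ (s+t)).1 j + c₂ * Qw a γ s t (γ (s+t)).2 j := by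
  obtain ⟨hne, h1, h2, h3, h4⟩ := hedge (s+t)
  rcases hx with hx | hx
  · refine ⟨1 - a (γ (s+t)).1 (γ (s+t)).2, a (γ (s+t)).1 (γ (s+t)).2, h2, h1, by ring, ?_⟩
    intro j
    subst hx
    exact locMat_mul_left hne _ j
  · refine ⟨a (γ (s+t)).2 (γ (s+t)).1, 1 - a (γ (s+t)).2 (γ (s+t)).1, h3, h4, by ring, ?_⟩
    intro j
    subst hx
    exact locMat_mul_right hne _ j

omit hα hedge

lemma Qw_other (s t : ℕ) {x : Fin n} (hx : x ≠ (γ (s+t)).1) (hx' : x ≠ (γ (s+t)).2) :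
    ∀ j, Qw a γ s (t+1) x j = Qw a γ s t x j :=
  fun j => locMat_mul_other _ hx hx' j

end ctx

section ctx2

variable {a : Fin n → Fin n → ℝ} {γ : ℕ → Fin n × Fin n} {abar : ℝ}
variable (hα : 0 < abar)
variable (hedge : ∀ t, (γ t).1 ≠ (γ t).2 ∧ abar ≤ a (γ t).1 (γ t).2 ∧
    abar ≤ 1 - a (γ t).1 (γ t).2 ∧ abar ≤ a (γ t).2 (γ t).1 ∧
    abar ≤ 1 - a (γ t).2 (γ t).1)

include hα hedge in
lemma psi_nonneg (s t : ℕ) (x y : Fin n) : 0 ≤ psi a γ s t x y :=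
  Finset.sum_nonneg fun j _ => le_min (Qw_nonneg hα hedge s t x j) (Qw_nonneg hα hedge s t y j)

lemma psi_comm (s t : ℕ) (x y : Fin n) : psi a γ s t x y = psi a γ s t y x :=
  Finset.sum_congr rfl fun j _ => min_comm _ _

lemma min_combo {c₁ c₂ p q r : ℝ} (h₁ : 0 ≤ c₁) (h₂ : 0 ≤ c₂) (h : c₁ + c₂ = 1) :
    c₁ * min p r + c₂ * min q r ≤ min (c₁ * p + c₂ * q) r := by
  refine le_min (add_le_add (mul_le_mul_of_nonneg_left (min_le_left _ _) h₁)
    (mul_le_mul_of_nonneg_left (min_le_left _ _) h₂)) ?_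
  calc c₁ * min p r + c₂ * min q r
      ≤ c₁ * r + c₂ * r := add_le_add (mul_le_mul_of_nonneg_left (min_le_right _ _) h₁)
        (mul_le_mul_of_nonneg_left (min_le_right _ _) h₂)
    _ = r := by rw [← add_mul, h, one_mul]

lemma Fset_succ_combo {s t : ℕ} {x : Fin n} (hx : x = (γ (s+t)).1 ∨ x = (γ (s+t)).2) :
    Fset γ s (t+1) x = Fset γ s t (γ (s+t)).1 ∪ Fset γ s t (γ (s+t)).2 := if_pos hx

lemma Fset_succ_other {s t : ℕ} {x : Fin n} (hx : ¬(x = (γ (s+t)).1 ∨ x = (γ (s+t)).2)) :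
    Fset γ s (t+1) x = Fset γ s t x := if_neg hx

lemma mem_Fset_self (s : ℕ) : ∀ t (x : Fin n), x ∈ Fset γ s t x := by
  intro t
  induction t with
  | zero => intro x; exact Finset.mem_singleton_self x
  | succ t ih =>
    intro x
    by_cases hx : x = (γ (s+t)).1 ∨ x = (γ (s+t)).2
    · rw [Fset_succ_combo hx]
      rcases hx with hx | hx
      · exact Finset.mem_union_left _ (hx ▸ ih _)
      · exact Finset.mem_union_right _ (hx ▸ ih _)
    · rw [Fset_succ_other hx]; exact ih x

lemma Fset_step_subset {s t : ℕ} (x : Fin n) : Fset γ s t x ⊆ Fset γ s (t+1) x := by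
  by_cases hx : x = (γ (s+t)).1 ∨ x = (γ (s+t)).2
  · rw [Fset_succ_combo hx]
    rcases hx with hx | hx
    · exact hx ▸ Finset.subset_union_left
    · exact hx ▸ Finset.subset_union_right
  · rw [Fset_succ_other hx]

lemma two_le_of_ne {x y : Fin n} (h : x ≠ y) : 2 ≤ n := by
  by_contra hn
  exact h (Fin.ext (by omega))

lemma qc_card_le {s t : ℕ} {x y : Fin n} (hxy : x ≠ y) : qc γ s t x y ≤ n - 2 := by
  have hsub : (Finset.univ.filter fun z => z ≠ x ∧ z ≠ y ∧
      ((Fset γ s t z ∩ Fset γ s t x) = ∅ ∨ (Fset γ s t z ∩ Fset γ s t y) = ∅))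
      ⊆ (Finset.univ.erase x).erase y := by
    intro z hz
    simp only [Finset.mem_filter] at hz
    exact Finset.mem_erase.mpr ⟨hz.2.2.1, Finset.mem_erase.mpr ⟨hz.2.1, Finset.mem_univ z⟩⟩
  have h1 : ((Finset.univ.erase x).erase y).card = n - 2 := by
    rw [Finset.card_erase_of_mem (Finset.mem_erase.mpr ⟨hxy.symm, Finset.mem_univ y⟩),
      Finset.card_erase_of_mem (Finset.mem_univ x)]
    simp only [Finset.card_univ, Fintype.card_fin]
    omega
  calc qc γ s t x y ≤ ((Finset.univ.erase x).erase y).card := Finset.card_le_card hsub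
    _ = n - 2 := h1

lemma qc_comm (s t : ℕ) (x y : Fin n) : qc γ s t x y = qc γ s t y x := by
  unfold qc
  congr 1
  apply Finset.filter_congr
  intro z _
  constructor
  · rintro ⟨h1, h2, h3⟩; exact ⟨h2, h1, h3.symm⟩
  · rintro ⟨h1, h2, h3⟩; exact ⟨h2, h1, h3.symm⟩

lemma inter_empty_mono {A B A' B' : Finset (Fin n)} (hA : A ⊆ A') (hB : B ⊆ B')
    (h : A' ∩ B' = ∅) : A ∩ B = ∅ :=
  Finset.subset_empty.mp (h ▸ Finset.inter_subset_inter hA hB)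

include hα hedge in
lemma psi_succ_pair (s t : ℕ) :
    abar ≤ psi a γ s (t+1) (γ (s+t)).1 (γ (s+t)).2 := by
  obtain ⟨c₁, c₂, hc₁, hc₂, hsum, hrow⟩ := Qw_combo (a := a) hedge s t (Or.inl rfl)
  obtain ⟨d₁, d₂, hd₁, hd₂, hdsum, hrow'⟩ := Qw_combo (a := a) hedge s t (Or.inr rfl)
  have key : ∀ j, abar * Qw a γ s t (γ (s+t)).1 j
      ≤ min (Qw a γ s (t+1) (γ (s+t)).1 j) (Qw a γ s (t+1) (γ (s+t)).2 j) := by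
    intro j
    have hQ1 := Qw_nonneg hα hedge s t (γ (s+t)).1 j
    have hQ2 := Qw_nonneg hα hedge s t (γ (s+t)).2 j
    refine le_min ?_ ?_
    · rw [hrow j]
      nlinarith [mul_le_mul_of_nonneg_right hc₁ hQ1, mul_nonneg (le_trans hα.le hc₂) hQ2]
    · rw [hrow' j]
      nlinarith [mul_le_mul_of_nonneg_right hd₁ hQ1, mul_nonneg (le_trans hα.le hd₂) hQ2]
  calc abar = abar * 1 := (mul_one _).symm
    _ = abar * ∑ j, Qw a γ s t (γ (s+t)).1 j := by rw [Qw_rowsum hedge]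
    _ = ∑ j, abar * Qw a γ s t (γ (s+t)).1 j := Finset.mul_sum _ _ _
    _ ≤ psi a γ s (t+1) (γ (s+t)).1 (γ (s+t)).2 := Finset.sum_le_sum fun j _ => key j

end ctx2

section ctx3

variable {a : Fin n → Fin n → ℝ} {γ : ℕ → Fin n × Fin n} {abar : ℝ}
variable (hα : 0 < abar)
variable (hedge : ∀ t, (γ t).1 ≠ (γ t).2 ∧ abar ≤ a (γ t).1 (γ t).2 ∧
    abar ≤ 1 - a (γ t).1 (γ t).2 ∧ abar ≤ a (γ t).2 (γ t).1 ∧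
    abar ≤ 1 - a (γ t).2 (γ t).1)
variable (hab1 : abar ≤ 1)

include hα hedge hab1 in
lemma step_combo_other (s t : ℕ)
    (IH : ∀ x y : Fin n, x ≠ y → ((Fset γ s t x) ∩ (Fset γ s t y)).Nonempty →
      abar ^ (n - 1 - qc γ s t x y) ≤ psi a γ s t x y)
    {x y : Fin n} (hx : x = (γ (s+t)).1 ∨ x = (γ (s+t)).2)
    (hy1 : y ≠ (γ (s+t)).1) (hy2 : y ≠ (γ (s+t)).2) (hxy : x ≠ y)
    (hint : ((Fset γ s (t+1) x) ∩ (Fset γ s (t+1) y)).Nonempty) :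
    abar ^ (n - 1 - qc γ s (t+1) x y) ≤ psi a γ s (t+1) x y := by
  set u := (γ (s+t)).1 with hu
  set v := (γ (s+t)).2 with hv
  have hne : u ≠ v := (hedge (s+t)).1
  have hyuv : ¬(y = u ∨ y = v) := by rintro (h | h); exacts [hy1 h, hy2 h]
  have hFx : Fset γ s (t+1) x = Fset γ s t u ∪ Fset γ s t v := Fset_succ_combo hx
  have hFy : Fset γ s (t+1) y = Fset γ s t y := Fset_succ_other hyuv
  obtain ⟨c₁, c₂, hc₁, hc₂, hsum, hrow⟩ := Qw_combo (a := a) hedge s t hx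
  have hQy : ∀ j, Qw a γ s (t+1) y j = Qw a γ s t y j := Qw_other s t hy1 hy2
  have hc₁0 : (0:ℝ) ≤ c₁ := le_trans hα.le hc₁
  have hc₂0 : (0:ℝ) ≤ c₂ := le_trans hα.le hc₂
  have hpsi : c₁ * psi a γ s t u y + c₂ * psi a γ s t v y ≤ psi a γ s (t+1) x y := by
    calc c₁ * psi a γ s t u y + c₂ * psi a γ s t v y
        = ∑ j, (c₁ * min (Qw a γ s t u j) (Qw a γ s t y j)
            + c₂ * min (Qw a γ s t v j) (Qw a γ s t y j)) := by
          rw [psi, psi, Finset.mul_sum, Finset.mul_sum, ← Finset.sum_add_distrib]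
      _ ≤ ∑ j, min (Qw a γ s (t+1) x j) (Qw a γ s (t+1) y j) := by
          refine Finset.sum_le_sum fun j _ => ?_
          rw [hrow j, hQy j]
          exact min_combo hc₁0 hc₂0 hsum
  have hself : x ∈ Fset γ s (t+1) x := mem_Fset_self s (t+1) x
  have hnotin : ∀ w : Fin n, (w = u ∨ w = v) →
      ¬(w ≠ x ∧ w ≠ y ∧ ((Fset γ s (t+1) w ∩ Fset γ s (t+1) x) = ∅ ∨
        (Fset γ s (t+1) w ∩ Fset γ s (t+1) y) = ∅)) := by
    rintro w hw ⟨hwx, hwy, hor⟩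
    have hFw : Fset γ s (t+1) w = Fset γ s (t+1) x := by
      rw [Fset_succ_combo hw, hFx]
    rcases hor with h | h
    · rw [hFw] at h
      have hmem := Finset.mem_inter.mpr ⟨hself, hself⟩
      rw [h] at hmem
      exact Finset.notMem_empty x hmem
    · rw [hFw] at h
      obtain ⟨z, hz⟩ := hint
      rw [h] at hz
      exact Finset.notMem_empty z hz
  have hsubr : ∀ r : Fin n, (r = u ∨ r = v) →
      (Finset.univ.filter fun z => z ≠ x ∧ z ≠ y ∧
        ((Fset γ s (t+1) z ∩ Fset γ s (t+1) x) = ∅ ∨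
         (Fset γ s (t+1) z ∩ Fset γ s (t+1) y) = ∅))
      ⊆ (Finset.univ.filter fun z => z ≠ r ∧ z ≠ y ∧
        ((Fset γ s t z ∩ Fset γ s t r) = ∅ ∨ (Fset γ s t z ∩ Fset γ s t y) = ∅)) := by
    intro r hr z hz
    simp only [Finset.mem_filter, Finset.mem_univ, true_and] at hz ⊢
    obtain ⟨hzx, hzy, hor⟩ := hz
    have hzuv : ¬(z = u ∨ z = v) := fun h => hnotin z h ⟨hzx, hzy, hor⟩
    have hzr : z ≠ r := by rcases hr with h | h <;> (subst h; tauto)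
    have hFtr : Fset γ s t r ⊆ Fset γ s (t+1) x := by
      rw [hFx]
      rcases hr with h | h
      · exact h ▸ Finset.subset_union_left
      · exact h ▸ Finset.subset_union_right
    refine ⟨hzr, hzy, ?_⟩
    rcases hor with h | h
    · exact Or.inl (inter_empty_mono (Fset_step_subset z) hFtr h)
    · exact Or.inr (inter_empty_mono (Fset_step_subset z) (hFy ▸ Finset.Subset.refl _) h)
  have hint' : ((Fset γ s t u ∩ Fset γ s t y) ∪ (Fset γ s t v ∩ Fset γ s t y)).Nonempty := by
    rw [← Finset.union_inter_distrib_right, ← hFx, ← hFy]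
    exact hint
  by_cases h1 : (Fset γ s t u ∩ Fset γ s t y).Nonempty
  · by_cases h2 : (Fset γ s t v ∩ Fset γ s t y).Nonempty
    · -- both intersect : use convexity
      have hqle1 : qc γ s (t+1) x y ≤ qc γ s t u y :=
        Finset.card_le_card (hsubr u (Or.inl rfl))
      have hqle2 : qc γ s (t+1) x y ≤ qc γ s t v y :=
        Finset.card_le_card (hsubr v (Or.inr rfl))
      have e1 : abar ^ (n - 1 - qc γ s (t+1) x y) ≤ psi a γ s t u y :=
        le_trans (pow_le_pow_of_le_one hα.le hab1 (by omega)) (IH u y (Ne.symm hy1) h1)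
      have e2 : abar ^ (n - 1 - qc γ s (t+1) x y) ≤ psi a γ s t v y :=
        le_trans (pow_le_pow_of_le_one hα.le hab1 (by omega)) (IH v y (Ne.symm hy2) h2)
      calc abar ^ (n - 1 - qc γ s (t+1) x y)
          = c₁ * abar ^ (n - 1 - qc γ s (t+1) x y)
            + c₂ * abar ^ (n - 1 - qc γ s (t+1) x y) := by rw [← add_mul, hsum, one_mul]
        _ ≤ c₁ * psi a γ s t u y + c₂ * psi a γ s t v y :=
            add_le_add (mul_le_mul_of_nonneg_left e1 hc₁0) (mul_le_mul_of_nonneg_left e2 hc₂0)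
        _ ≤ psi a γ s (t+1) x y := hpsi
    · -- only u-side intersects
      have h2e : Fset γ s t v ∩ Fset γ s t y = ∅ := Finset.not_nonempty_iff_eq_empty.mp h2
      have hvmem : v ∈ (Finset.univ.filter fun z => z ≠ u ∧ z ≠ y ∧
          ((Fset γ s t z ∩ Fset γ s t u) = ∅ ∨ (Fset γ s t z ∩ Fset γ s t y) = ∅)) := by
        simp only [Finset.mem_filter, Finset.mem_univ, true_and]
        exact ⟨Ne.symm hne, Ne.symm hy2, Or.inr h2e⟩
      have hvnot : v ∉ (Finset.univ.filter fun z => z ≠ x ∧ z ≠ y ∧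
          ((Fset γ s (t+1) z ∩ Fset γ s (t+1) x) = ∅ ∨
           (Fset γ s (t+1) z ∩ Fset γ s (t+1) y) = ∅)) := by
        intro hmem
        simp only [Finset.mem_filter, Finset.mem_univ, true_and] at hmem
        exact hnotin v (Or.inr rfl) hmem
      have hqlt : qc γ s (t+1) x y < qc γ s t u y :=
        Finset.card_lt_card
          ((Finset.ssubset_iff_of_subset (hsubr u (Or.inl rfl))).mpr ⟨v, hvmem, hvnot⟩)
      have hqb : qc γ s t u y ≤ n - 2 := qc_card_le (Ne.symm hy1)
      have hn2 : 2 ≤ n := two_le_of_ne hxy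
      have e1 : abar ^ (n - 1 - qc γ s t u y) ≤ psi a γ s t u y := IH u y (Ne.symm hy1) h1
      calc abar ^ (n - 1 - qc γ s (t+1) x y)
          ≤ abar ^ ((n - 1 - qc γ s t u y) + 1) :=
            pow_le_pow_of_le_one hα.le hab1 (by omega)
        _ = abar * abar ^ (n - 1 - qc γ s t u y) := by rw [pow_succ, mul_comm]
        _ ≤ c₁ * psi a γ s t u y :=
            mul_le_mul hc₁ e1 (pow_nonneg hα.le _) hc₁0
        _ ≤ c₁ * psi a γ s t u y + c₂ * psi a γ s t v y :=
            le_add_of_nonneg_right (mul_nonneg hc₂0 (psi_nonneg hα hedge s t v y))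
        _ ≤ psi a γ s (t+1) x y := hpsi
  · -- u-side empty
    have h1e : Fset γ s t u ∩ Fset γ s t y = ∅ := Finset.not_nonempty_iff_eq_empty.mp h1
    have h2 : (Fset γ s t v ∩ Fset γ s t y).Nonempty := by
      obtain ⟨z, hz⟩ := hint'
      rcases Finset.mem_union.mp hz with h | h
      · exact absurd ⟨z, h⟩ h1
      · exact ⟨z, h⟩
    have humem : u ∈ (Finset.univ.filter fun z => z ≠ v ∧ z ≠ y ∧
        ((Fset γ s t z ∩ Fset γ s t v) = ∅ ∨ (Fset γ s t z ∩ Fset γ s t y) = ∅)) := by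
      simp only [Finset.mem_filter, Finset.mem_univ, true_and]
      exact ⟨hne, Ne.symm hy1, Or.inr h1e⟩
    have hunot : u ∉ (Finset.univ.filter fun z => z ≠ x ∧ z ≠ y ∧
        ((Fset γ s (t+1) z ∩ Fset γ s (t+1) x) = ∅ ∨
         (Fset γ s (t+1) z ∩ Fset γ s (t+1) y) = ∅)) := by
      intro hmem
      simp only [Finset.mem_filter, Finset.mem_univ, true_and] at hmem
      exact hnotin u (Or.inl rfl) hmem
    have hqlt : qc γ s (t+1) x y < qc γ s t v y :=
      Finset.card_lt_card
        ((Finset.ssubset_iff_of_subset (hsubr v (Or.inr rfl))).mpr ⟨u, humem, hunot⟩)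
    have hqb : qc γ s t v y ≤ n - 2 := qc_card_le (Ne.symm hy2)
    have hn2 : 2 ≤ n := two_le_of_ne hxy
    have e2 : abar ^ (n - 1 - qc γ s t v y) ≤ psi a γ s t v y := IH v y (Ne.symm hy2) h2
    calc abar ^ (n - 1 - qc γ s (t+1) x y)
        ≤ abar ^ ((n - 1 - qc γ s t v y) + 1) :=
          pow_le_pow_of_le_one hα.le hab1 (by omega)
      _ = abar * abar ^ (n - 1 - qc γ s t v y) := by rw [pow_succ, mul_comm]
      _ ≤ c₂ * psi a γ s t v y :=
          mul_le_mul hc₂ e2 (pow_nonneg hα.le _) hc₂0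
      _ ≤ c₁ * psi a γ s t u y + c₂ * psi a γ s t v y :=
          le_add_of_nonneg_left (mul_nonneg hc₁0 (psi_nonneg hα hedge s t u y))
      _ ≤ psi a γ s (t+1) x y := hpsi

end ctx3

section ctx4

variable {a : Fin n → Fin n → ℝ} {γ : ℕ → Fin n × Fin n} {abar : ℝ}
variable (hα : 0 < abar)
variable (hedge : ∀ t, (γ t).1 ≠ (γ t).2 ∧ abar ≤ a (γ t).1 (γ t).2 ∧
    abar ≤ 1 - a (γ t).1 (γ t).2 ∧ abar ≤ a (γ t).2 (γ t).1 ∧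
    abar ≤ 1 - a (γ t).2 (γ t).1)
variable (hab1 : abar ≤ 1)

include hα hedge hab1 in
lemma invariant (s : ℕ) : ∀ t, ∀ x y : Fin n, x ≠ y →
    ((Fset γ s t x) ∩ (Fset γ s t y)).Nonempty →
    abar ^ (n - 1 - qc γ s t x y) ≤ psi a γ s t x y := by
  intro t
  induction t with
  | zero =>
    intro x y hxy hint
    exfalso
    obtain ⟨z, hz⟩ := hint
    obtain ⟨hz1, hz2⟩ := Finset.mem_inter.mp hz
    exact hxy ((Finset.mem_singleton.mp hz1).symm.trans (Finset.mem_singleton.mp hz2))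
  | succ t ih =>
    intro x y hxy hint
    by_cases hxuv : x = (γ (s+t)).1 ∨ x = (γ (s+t)).2
    · by_cases hyuv : y = (γ (s+t)).1 ∨ y = (γ (s+t)).2
      · -- both endpoints of the fired edge
        have hq : qc γ s (t+1) x y ≤ n - 2 := qc_card_le hxy
        have hn2 : 2 ≤ n := two_le_of_ne hxy
        have hb : abar ^ (n - 1 - qc γ s (t+1) x y) ≤ abar ^ 1 :=
          pow_le_pow_of_le_one hα.le hab1 (by omega)
        rw [pow_one] at hb
        refine le_trans hb ?_
        rcases hxuv with hx | hx <;> rcases hyuv with hy | hy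
        · exact absurd (hx.trans hy.symm) hxy
        · rw [hx, hy]; exact psi_succ_pair hα hedge s t
        · rw [hx, hy, psi_comm]; exact psi_succ_pair hα hedge s t
        · exact absurd (hx.trans hy.symm) hxy
      · push_neg at hyuv
        exact step_combo_other hα hedge hab1 s t ih hxuv hyuv.1 hyuv.2 hxy hint
    · by_cases hyuv : y = (γ (s+t)).1 ∨ y = (γ (s+t)).2
      · push_neg at hxuv
        rw [psi_comm, qc_comm]
        rw [Finset.inter_comm] at hint
        exact step_combo_other hα hedge hab1 s t ih hyuv hxuv.1 hxuv.2 (Ne.symm hxy) hint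
      · -- untouched pair
        have hFx : Fset γ s (t+1) x = Fset γ s t x := Fset_succ_other hxuv
        have hFy : Fset γ s (t+1) y = Fset γ s t y := Fset_succ_other hyuv
        push_neg at hxuv hyuv
        have hpsieq : psi a γ s (t+1) x y = psi a γ s t x y := by
          refine Finset.sum_congr rfl fun j _ => ?_
          rw [Qw_other s t hxuv.1 hxuv.2 j, Qw_other s t hyuv.1 hyuv.2 j]
        have hqle : qc γ s (t+1) x y ≤ qc γ s t x y := by
          refine Finset.card_le_card ?_
          intro z hz
          simp only [Finset.mem_filter, Finset.mem_univ, true_and] at hz ⊢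
          obtain ⟨hzx, hzy, hor⟩ := hz
          refine ⟨hzx, hzy, ?_⟩
          rcases hor with h | h
          · exact Or.inl (inter_empty_mono (Fset_step_subset z)
              (hFx ▸ Finset.Subset.refl _) h)
          · exact Or.inr (inter_empty_mono (Fset_step_subset z)
              (hFy ▸ Finset.Subset.refl _) h)
        rw [hpsieq]
        refine le_trans (pow_le_pow_of_le_one hα.le hab1
          (show n - 1 - qc γ s t x y ≤ n - 1 - qc γ s (t+1) x y by omega)) ?_
        exact ih x y hxy (by rwa [hFx, hFy] at hint)

end ctx4

/-- Influence sets: process a list of edges, absorbing any edge that touches the set. -/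
def Jset : List (Fin n × Fin n) → Finset (Fin n) → Finset (Fin n)
  | [], A => A
  | e :: es, A => Jset es (if (A ∩ {e.1, e.2}).Nonempty then A ∪ {e.1, e.2} else A)

lemma Jset_subset : ∀ (es : List (Fin n × Fin n)) (A : Finset (Fin n)), A ⊆ Jset es A := by
  intro es
  induction es with
  | nil => intro A; exact Finset.Subset.refl A
  | cons e es ih =>
    intro A
    show A ⊆ Jset es _
    refine Finset.Subset.trans ?_ (ih _)
    split
    · exact Finset.subset_union_left
    · exact Finset.Subset.refl A

lemma Jset_append : ∀ (l₁ l₂ : List (Fin n × Fin n)) (A : Finset (Fin n)),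
    Jset (l₁ ++ l₂) A = Jset l₂ (Jset l₁ A) := by
  intro l₁
  induction l₁ with
  | nil => intro l₂ A; rfl
  | cons e es ih => intro l₂ A; exact ih l₂ _

lemma Jset_union : ∀ (es : List (Fin n × Fin n)) (A B : Finset (Fin n)),
    Jset es (A ∪ B) = Jset es A ∪ Jset es B := by
  intro es
  induction es with
  | nil => intro A B; rfl
  | cons e es ih =>
    intro A B
    show Jset es _ = Jset es _ ∪ Jset es _
    rw [← ih]
    congr 1
    by_cases hA : (A ∩ {e.1, e.2}).Nonempty <;> by_cases hB : (B ∩ {e.1, e.2}).Nonempty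
    · have hAB : ((A ∪ B) ∩ {e.1, e.2}).Nonempty := by
        obtain ⟨z, hz⟩ := hA
        rw [Finset.mem_inter] at hz
        exact ⟨z, Finset.mem_inter.mpr ⟨Finset.mem_union_left _ hz.1, hz.2⟩⟩
      rw [if_pos hAB, if_pos hA, if_pos hB]
      ext z; simp only [Finset.mem_union]; tauto
    · have hAB : ((A ∪ B) ∩ {e.1, e.2}).Nonempty := by
        obtain ⟨z, hz⟩ := hA
        rw [Finset.mem_inter] at hz
        exact ⟨z, Finset.mem_inter.mpr ⟨Finset.mem_union_left _ hz.1, hz.2⟩⟩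
      rw [if_pos hAB, if_pos hA, if_neg hB]
      ext z; simp only [Finset.mem_union]; tauto
    · have hAB : ((A ∪ B) ∩ {e.1, e.2}).Nonempty := by
        obtain ⟨z, hz⟩ := hB
        rw [Finset.mem_inter] at hz
        exact ⟨z, Finset.mem_inter.mpr ⟨Finset.mem_union_right _ hz.1, hz.2⟩⟩
      rw [if_pos hAB, if_neg hA, if_pos hB]
      ext z; simp only [Finset.mem_union]; tauto
    · have hAB : ¬((A ∪ B) ∩ {e.1, e.2}).Nonempty := by
        rintro ⟨z, hz⟩
        rw [Finset.mem_inter, Finset.mem_union] at hz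
        rcases hz.1 with h | h
        · exact hA ⟨z, Finset.mem_inter.mpr ⟨h, hz.2⟩⟩
        · exact hB ⟨z, Finset.mem_inter.mpr ⟨h, hz.2⟩⟩
      rw [if_neg hAB, if_neg hA, if_neg hB]

lemma mem_Jset_of : ∀ (es : List (Fin n × Fin n)) (p q : Fin n) (A : Finset (Fin n)),
    ((p, q) ∈ es ∨ (q, p) ∈ es) → p ∈ A → q ∈ Jset es A := by
  intro es
  induction es with
  | nil => rintro p q A (h | h) _ <;> exact absurd h (List.not_mem_nil)
  | cons e es ih =>
    rintro p q A hmem hp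
    have hstep : A ⊆ (if (A ∩ {e.1, e.2}).Nonempty then A ∪ {e.1, e.2} else A) := by
      split
      · exact Finset.subset_union_left
      · exact Finset.Subset.refl A
    by_cases he : e = (p, q) ∨ e = (q, p)
    · -- the head edge is our edge
      have h1 : p ∈ ({e.1, e.2} : Finset (Fin n)) := by
        rcases he with h | h <;> subst h <;> simp
      have h2 : q ∈ ({e.1, e.2} : Finset (Fin n)) := by
        rcases he with h | h <;> subst h <;> simp
      have hne : (A ∩ {e.1, e.2}).Nonempty := ⟨p, Finset.mem_inter.mpr ⟨hp, h1⟩⟩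
      show q ∈ Jset es _
      rw [if_pos hne]
      exact Jset_subset es _ (Finset.mem_union_right _ h2)
    · have hmem' : (p, q) ∈ es ∨ (q, p) ∈ es := by
        rcases hmem with h | h
        · rcases List.mem_cons.mp h with h' | h'
          · exact absurd (Or.inl h'.symm) he
          · exact Or.inl h'
        · rcases List.mem_cons.mp h with h' | h'
          · exact absurd (Or.inr h'.symm) he
          · exact Or.inr h'
      exact ih p q _ hmem' (hstep hp)

lemma walk_crossing {G' : SimpleGraph (Fin n)} {A : Finset (Fin n)} :
    ∀ {p r : Fin n}, G'.Walk p r → p ∈ A → r ∉ A →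
      ∃ x y, x ∈ A ∧ y ∉ A ∧ G'.Adj x y := by
  intro p r w
  induction w with
  | nil => intro hp hr; exact absurd hp hr
  | @cons p' v r' h w ih =>
    intro hp hr
    by_cases hv : v ∈ A
    · exact ih hv hr
    · exact ⟨p', v, hp, hv, h⟩

lemma Jset_grow {es : List (Fin n × Fin n)}
    (hsp : (SimpleGraph.fromRel fun i j =>
        ∃ e ∈ es, e = (i, j) ∨ e = (j, i)).Connected)
    {A : Finset (Fin n)} (hA : A.Nonempty) (hA' : A ≠ Finset.univ) :
    ∃ w, w ∉ A ∧ w ∈ Jset es A := by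
  obtain ⟨p, hp⟩ := hA
  obtain ⟨r, hr⟩ : ∃ r, r ∉ A := by
    by_contra h
    push_neg at h
    exact hA' (Finset.eq_univ_iff_forall.mpr h)
  obtain ⟨w⟩ := hsp.preconnected p r
  obtain ⟨x, y, hx, hy, hadj⟩ := walk_crossing w hp hr
  rw [SimpleGraph.fromRel_adj] at hadj
  obtain ⟨-, hrel⟩ := hadj
  have hxy : (x, y) ∈ es ∨ (y, x) ∈ es := by
    rcases hrel with ⟨e, he, h⟩ | ⟨e, he, h⟩
    · rcases h with h | h
      · exact Or.inl (h ▸ he)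
      · exact Or.inr (h ▸ he)
    · rcases h with h | h
      · exact Or.inr (h ▸ he)
      · exact Or.inl (h ▸ he)
  exact ⟨y, hy, mem_Jset_of es x y A hxy hx⟩

lemma Jset_card_grow {es : List (Fin n × Fin n)}
    (hsp : (SimpleGraph.fromRel fun i j =>
        ∃ e ∈ es, e = (i, j) ∨ e = (j, i)).Connected)
    {A : Finset (Fin n)} (hA : A.Nonempty) (hcard : A.card < n) :
    A.card + 1 ≤ (Jset es A).card := by
  have hA' : A ≠ Finset.univ := by
    intro h
    rw [h, Finset.card_univ, Fintype.card_fin] at hcard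
    omega
  obtain ⟨w, hw, hwJ⟩ := Jset_grow hsp hA hA'
  exact Finset.card_lt_card
    ((Finset.ssubset_iff_of_subset (Jset_subset es A)).mpr ⟨w, hwJ, hw⟩)

section ctx5

variable {γ : ℕ → Fin n × Fin n}

/-- The list of edges `γ s, …, γ (s+t-1)`. -/
def seqList (γ : ℕ → Fin n × Fin n) (s t : ℕ) : List (Fin n × Fin n) :=
  (List.range t).map fun k => γ (s + k)

lemma seqList_append (s t₁ t₂ : ℕ) :
    seqList γ s (t₁ + t₂) = seqList γ s t₁ ++ seqList γ (s + t₁) t₂ := by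
  unfold seqList
  rw [List.range_add, List.map_append, List.map_map]
  congr 1
  ext k
  simp [Function.comp, add_assoc]

lemma seqList_succ (s t : ℕ) :
    seqList γ s (t + 1) = seqList γ s t ++ [γ (s + t)] := by
  rw [seqList_append s t 1]
  rfl

lemma Fset_eq_Jset (s : ℕ) : ∀ t (x : Fin n),
    Fset γ s t x = Jset (seqList γ s t).reverse {x} := by
  intro t
  induction t with
  | zero => intro x; rfl
  | succ t ih =>
    intro x
    rw [seqList_succ, List.reverse_append]
    show Fset γ s (t+1) x = Jset ((γ (s+t)) :: (seqList γ s t).reverse) {x}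
    show Fset γ s (t+1) x = Jset (seqList γ s t).reverse
      (if (({x} : Finset (Fin n)) ∩ {(γ (s+t)).1, (γ (s+t)).2}).Nonempty
        then {x} ∪ {(γ (s+t)).1, (γ (s+t)).2} else {x})
    by_cases hx : x = (γ (s+t)).1 ∨ x = (γ (s+t)).2
    · have hxm : x ∈ ({(γ (s+t)).1, (γ (s+t)).2} : Finset (Fin n)) := by
        rcases hx with h | h
        · exact Finset.mem_insert.mpr (Or.inl h)
        · exact Finset.mem_insert.mpr (Or.inr (Finset.mem_singleton.mpr h))
      rw [if_pos ⟨x, Finset.mem_inter.mpr ⟨Finset.mem_singleton_self x, hxm⟩⟩]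
      have hset : ({x} : Finset (Fin n)) ∪ {(γ (s+t)).1, (γ (s+t)).2}
          = ({(γ (s+t)).1} : Finset (Fin n)) ∪ {(γ (s+t)).2} := by
        ext z
        simp only [Finset.mem_union, Finset.mem_singleton, Finset.mem_insert]
        constructor
        · rintro (h | h | h)
          · rcases hx with h' | h' <;> [exact Or.inl (h.trans h'); exact Or.inr (h.trans h')]
          · exact Or.inl h
          · exact Or.inr h
        · rintro (h | h)
          · exact Or.inr (Or.inl h)
          · exact Or.inr (Or.inr h)
      rw [hset, Jset_union, ← ih, ← ih, Fset_succ_combo hx]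
    · have hxm : ¬(({x} : Finset (Fin n)) ∩ {(γ (s+t)).1, (γ (s+t)).2}).Nonempty := by
        rintro ⟨z, hz⟩
        rw [Finset.mem_inter, Finset.mem_singleton] at hz
        obtain ⟨rfl, hz2⟩ := hz
        rcases Finset.mem_insert.mp hz2 with h | h
        · exact hx (Or.inl h)
        · exact hx (Or.inr (Finset.mem_singleton.mp h))
      rw [if_neg hxm, ← ih, Fset_succ_other hx]

lemma spanning_list {s' m : ℕ} (hs : SpanningSeg γ s' m) :
    (SimpleGraph.fromRel fun i j =>
      ∃ e ∈ (seqList γ s' m).reverse, e = (i, j) ∨ e = (j, i)).Connected := by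
  have hrel : (fun i j => ∃ e ∈ (seqList γ s' m).reverse, e = (i, j) ∨ e = (j, i))
      = (fun i j => ∃ t, s' ≤ t ∧ t < s' + m ∧ (γ t = (i, j) ∨ γ t = (j, i))) := by
    funext i j
    apply propext
    constructor
    · rintro ⟨e, he, hor⟩
      rw [List.mem_reverse] at he
      obtain ⟨k, hk, rfl⟩ := List.mem_map.mp he
      rw [List.mem_range] at hk
      exact ⟨s' + k, Nat.le_add_right _ _, by omega, hor⟩
    · rintro ⟨t, h1, h2, hor⟩
      refine ⟨γ t, ?_, hor⟩
      rw [List.mem_reverse]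
      refine List.mem_map.mpr ⟨t - s', List.mem_range.mpr (by omega), ?_⟩
      congr 1
      omega
  rw [hrel]
  exact hs

lemma multi_grow (m : ℕ) (hspan : ∀ s', SpanningSeg γ s' m) (s : ℕ) :
    ∀ (k : ℕ) (A : Finset (Fin n)), A.Nonempty →
      min n (A.card + k) ≤ (Jset (seqList γ s (m * k)).reverse A).card := by
  intro k
  induction k generalizing s with
  | zero =>
    intro A hA
    have hc : A.card ≤ n := by
      have := Finset.card_le_univ A
      simpa [Finset.card_univ] using this
    have h0 : seqList γ s (m * 0) = [] := by simp [seqList]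
    rw [h0]
    show min n (A.card + 0) ≤ A.card
    omega
  | succ k ih =>
    intro A hA
    have hsplit : seqList γ s (m * (k+1)) = seqList γ s (m * k) ++ seqList γ (s + m * k) m := by
      rw [Nat.mul_succ, seqList_append]
    rw [hsplit, List.reverse_append, Jset_append]
    set B := Jset (seqList γ (s + m * k) m).reverse A with hB
    have hB1 : A ⊆ B := Jset_subset _ A
    have hBne : B.Nonempty := hA.mono hB1
    have hBn : B.card ≤ n := by
      have := Finset.card_le_univ B
      simpa [Finset.card_univ] using this
    have hBcard : min n (A.card + 1) ≤ B.card := by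
      by_cases hc : A.card < n
      · have h2 := Jset_card_grow (spanning_list (hspan (s + m * k))) hA hc
        rw [← hB] at h2
        omega
      · have := Finset.card_le_card hB1
        omega
    have hfin := ih s B hBne
    refine le_trans ?_ hfin
    omega

end ctx5

section ctx6

variable {a : Fin n → Fin n → ℝ} {γ : ℕ → Fin n × Fin n} {abar : ℝ} {m : ℕ}

lemma Fset_card_lb (hspan : ∀ s', SpanningSeg γ s' m) (s : ℕ) (x : Fin n) :
    min n (1 + n / 2) ≤ (Fset γ s (m * (n / 2)) x).card := by
  rw [Fset_eq_Jset]
  have h := multi_grow m hspan s (n / 2) {x} ⟨x, Finset.mem_singleton_self x⟩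
  rw [Finset.card_singleton] at h
  exact h

lemma Fset_inter_nonempty (hspan : ∀ s', SpanningSeg γ s' m) (hn2 : 2 ≤ n)
    (s : ℕ) (x y : Fin n) :
    ((Fset γ s (m * (n / 2)) x) ∩ (Fset γ s (m * (n / 2)) y)).Nonempty := by
  have hx := Fset_card_lb hspan s x
  have hy := Fset_card_lb hspan s y
  have hiu := Finset.card_inter_add_card_union
    (Fset γ s (m * (n / 2)) x) (Fset γ s (m * (n / 2)) y)
  have hu : (Fset γ s (m * (n / 2)) x ∪ Fset γ s (m * (n / 2)) y).card ≤ n := by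
    have := Finset.card_le_univ (Fset γ s (m * (n / 2)) x ∪ Fset γ s (m * (n / 2)) y)
    simpa [Finset.card_univ] using this
  exact Finset.card_pos.mp (by omega)

variable (hα : 0 < abar)
variable (hedge : ∀ t, (γ t).1 ≠ (γ t).2 ∧ abar ≤ a (γ t).1 (γ t).2 ∧
    abar ≤ 1 - a (γ t).1 (γ t).2 ∧ abar ≤ a (γ t).2 (γ t).1 ∧
    abar ≤ 1 - a (γ t).2 (γ t).1)
variable (hab1 : abar ≤ 1)

include hα hedge hab1 in
lemma window_scrambling (hspan : ∀ s', SpanningSeg γ s' m) (hn2 : 2 ≤ n) (s : ℕ)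
    (x y : Fin n) :
    abar ^ (n - 1) ≤ ∑ j, min (Qw a γ s (m * (n / 2)) x j) (Qw a γ s (m * (n / 2)) y j) := by
  by_cases hxy : x = y
  · subst hxy
    have : ∑ j, min (Qw a γ s (m * (n / 2)) x j) (Qw a γ s (m * (n / 2)) x j) = 1 := by
      simp only [min_self]
      exact Qw_rowsum hedge s _ x
    rw [this]
    exact pow_le_one₀ hα.le hab1
  · have hint := Fset_inter_nonempty hspan hn2 s x y
    have hinv := invariant hα hedge hab1 s (m * (n / 2)) x y hxy hint
    exact le_trans (pow_le_pow_of_le_one hα.le hab1 (Nat.sub_le _ _)) hinv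

end ctx6

section snorm

lemma sNorm_le_of (hn : 0 < n) {A : Matrix (Fin n) (Fin n) ℝ} {c : ℝ}
    (h : ∀ j i₁ i₂, |A i₁ j - A i₂ j| ≤ c) : sNorm A ≤ c := by
  haveI : Nonempty (Fin n) := ⟨⟨0, hn⟩⟩
  exact ciSup_le fun j => ciSup_le fun i₁ => ciSup_le fun i₂ => h j i₁ i₂

lemma abs_sub_le_sNorm (hn : 0 < n) (A : Matrix (Fin n) (Fin n) ℝ) (j i₁ i₂ : Fin n) :
    |A i₁ j - A i₂ j| ≤ sNorm A := by
  haveI : Nonempty (Fin n) := ⟨⟨0, hn⟩⟩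
  have h1 : |A i₁ j - A i₂ j| ≤ ⨆ i₂', |A i₁ j - A i₂' j| :=
    le_ciSup (f := fun i₂' => |A i₁ j - A i₂' j|)
      (Set.Finite.bddAbove (Set.finite_range _)) i₂
  have h2 : (⨆ i₂', |A i₁ j - A i₂' j|) ≤ ⨆ i₁', ⨆ i₂', |A i₁' j - A i₂' j| :=
    le_ciSup (f := fun i₁' => ⨆ i₂', |A i₁' j - A i₂' j|)
      (Set.Finite.bddAbove (Set.finite_range _)) i₁
  have h3 : (⨆ i₁', ⨆ i₂', |A i₁' j - A i₂' j|)
      ≤ ⨆ j', ⨆ i₁', ⨆ i₂', |A i₁' j' - A i₂' j'| :=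
    le_ciSup (f := fun j' => ⨆ i₁', ⨆ i₂', |A i₁' j' - A i₂' j'|)
      (Set.Finite.bddAbove (Set.finite_range _)) j
  exact le_trans h1 (le_trans h2 h3)

lemma sNorm_nonneg' (hn : 0 < n) (A : Matrix (Fin n) (Fin n) ℝ) : 0 ≤ sNorm A :=
  le_trans (abs_nonneg _) (abs_sub_le_sNorm hn A ⟨0, hn⟩ ⟨0, hn⟩ ⟨0, hn⟩)

lemma sNorm_contract (hn : 0 < n) {Q M : Matrix (Fin n) (Fin n) ℝ}
    (hQ0 : ∀ i j, 0 ≤ Q i j) (hQ1 : ∀ i, ∑ j, Q i j = 1) {δ : ℝ} (hδ0 : 0 ≤ δ)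
    (hδ : ∀ i₁ i₂, δ ≤ ∑ k, min (Q i₁ k) (Q i₂ k)) :
    sNorm (Q * M) ≤ (1 - δ) * sNorm M := by
  haveI : Nonempty (Fin n) := ⟨⟨0, hn⟩⟩
  have hδ1 : δ ≤ 1 := by
    have h := hδ ⟨0, hn⟩ ⟨0, hn⟩
    simp only [min_self] at h
    rw [hQ1 ⟨0, hn⟩] at h
    exact h
  have key : ∀ i₁ i₂ c, (Q * M) i₁ c - (Q * M) i₂ c ≤ (1 - δ) * sNorm M := by
    intro i₁ i₂ c
    have hσδ : δ ≤ ∑ k, min (Q i₁ k) (Q i₂ k) := hδ i₁ i₂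
    set σ := ∑ k, min (Q i₁ k) (Q i₂ k) with hσdef
    have hσ1 : σ ≤ 1 := by
      rw [hσdef, ← hQ1 i₁]
      exact Finset.sum_le_sum fun k _ => min_le_left _ _
    have hne : (Finset.univ : Finset (Fin n)).Nonempty := Finset.univ_nonempty
    set Mx := Finset.univ.sup' hne (fun k => M k c) with hMxdef
    set Mn := Finset.univ.inf' hne (fun k => M k c) with hMndef
    have hsum1 : ∑ k, (Q i₁ k - min (Q i₁ k) (Q i₂ k)) = 1 - σ := by
      rw [Finset.sum_sub_distrib, hQ1]
    have hsum2 : ∑ k, (Q i₂ k - min (Q i₁ k) (Q i₂ k)) = 1 - σ := by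
      rw [Finset.sum_sub_distrib, hQ1]
    have hup : ∑ k, (Q i₁ k - min (Q i₁ k) (Q i₂ k)) * M k c ≤ (1 - σ) * Mx := by
      rw [← hsum1, Finset.sum_mul]
      refine Finset.sum_le_sum fun k _ => ?_
      exact mul_le_mul_of_nonneg_left (Finset.le_sup' (fun k => M k c) (Finset.mem_univ k))
        (sub_nonneg.mpr (min_le_left _ _))
    have hlo : (1 - σ) * Mn ≤ ∑ k, (Q i₂ k - min (Q i₁ k) (Q i₂ k)) * M k c := by
      rw [← hsum2, Finset.sum_mul]
      refine Finset.sum_le_sum fun k _ => ?_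
      exact mul_le_mul_of_nonneg_left (Finset.inf'_le (fun k => M k c) (Finset.mem_univ k))
        (sub_nonneg.mpr (min_le_right _ _))
    have hdiff : (Q * M) i₁ c - (Q * M) i₂ c
        = (∑ k, (Q i₁ k - min (Q i₁ k) (Q i₂ k)) * M k c)
          - ∑ k, (Q i₂ k - min (Q i₁ k) (Q i₂ k)) * M k c := by
      rw [Matrix.mul_apply, Matrix.mul_apply]
      rw [Finset.sum_congr rfl (fun k _ => sub_mul (Q i₁ k) (min (Q i₁ k) (Q i₂ k)) (M k c)),
        Finset.sum_congr rfl (fun k _ => sub_mul (Q i₂ k) (min (Q i₁ k) (Q i₂ k)) (M k c)),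
        Finset.sum_sub_distrib, Finset.sum_sub_distrib]
      ring
    have hMxn : Mx - Mn ≤ sNorm M := by
      obtain ⟨k1, -, hk1⟩ := Finset.exists_mem_eq_sup' hne (fun k => M k c)
      obtain ⟨k2, -, hk2⟩ := Finset.exists_mem_eq_inf' hne (fun k => M k c)
      rw [hMxdef, hMndef, hk1, hk2]
      exact le_trans (le_abs_self _) (abs_sub_le_sNorm hn M c k1 k2)
    have hMn_le_Mx : Mn ≤ Mx :=
      le_trans (Finset.inf'_le (fun k => M k c) (Finset.mem_univ ⟨0, hn⟩))
        (Finset.le_sup' (fun k => M k c) (Finset.mem_univ ⟨0, hn⟩))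
    have hs := sNorm_nonneg' hn M
    calc (Q * M) i₁ c - (Q * M) i₂ c
        ≤ (1 - σ) * Mx - (1 - σ) * Mn := by rw [hdiff]; exact sub_le_sub hup hlo
      _ = (1 - σ) * (Mx - Mn) := by ring
      _ ≤ (1 - δ) * sNorm M :=
          mul_le_mul (by linarith) hMxn (by linarith) (by linarith)
  have hnn : 0 ≤ (1 - δ) * sNorm M := mul_nonneg (by linarith) (sNorm_nonneg' hn M)
  refine sNorm_le_of hn fun j i₁ i₂ => ?_
  exact abs_sub_le_iff.mpr ⟨key i₁ i₂ j, key i₂ i₁ j⟩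

end snorm

lemma Pseq_shift (a : Fin n → Fin n → ℝ) (γ : ℕ → Fin n × Fin n) (s : ℕ) :
    ∀ t : ℕ, Pseq a γ (s + t) = Qw a γ s t * Pseq a γ s := by
  intro t
  induction t with
  | zero => show Pseq a γ s = 1 * Pseq a γ s; rw [one_mul]
  | succ t ih =>
    show locMat a (γ (s+t)).1 (γ (s+t)).2 * Pseq a γ (s+t) = _
    rw [ih, ← Matrix.mul_assoc]
    rfl

lemma Pseq_eq_Qw0 (a : Fin n → Fin n → ℝ) (γ : ℕ → Fin n × Fin n) (t : ℕ) :
    Pseq a γ t = Qw a γ 0 t := by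
  have h := Pseq_shift a γ 0 t
  rw [zero_add] at h
  rw [h]
  show Qw a γ 0 t * 1 = Qw a γ 0 t
  rw [mul_one]

end S14
/-- If the local stochastic matrices are holonomic for `G` and `γ` is an infinite
`m`-spanning sequence of edges, then
`‖P_{γ(t:0)}‖_S ≤ (1-ε)^{t/(m⌊n/2⌋) - 1}` for all `t ≥ 1`, where `ε = a̲^{n-1}`. -/
theorem stmt14 {n : ℕ} (G : SimpleGraph (Fin n)) (hGc : G.Connected)
    (a : Fin n → Fin n → ℝ) (ha : ∀ i j, G.Adj i j → a i j ∈ Set.Ioo (0:ℝ) 1)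
    (hol : Holonomic G a)
    (abar : ℝ)
    (habar : IsLeast {x : ℝ | ∃ i j, G.Adj i j ∧ (x = a i j ∨ x = 1 - a i j)} abar)
    (γ : ℕ → Fin n × Fin n) (hγ : ∀ t, G.Adj (γ t).1 (γ t).2)
    (m : ℕ) (hm : 0 < m) (hspan : ∀ s, SpanningSeg γ s m) :
    ∀ t : ℕ, 1 ≤ t →
      sNorm (Pseq a γ t) ≤
        (1 - abar ^ (n - 1)) ^ ((t : ℝ) / ((m * (n / 2) : ℕ) : ℝ) - 1) := by
  obtain ⟨i0, j0, hadj0, hor0⟩ := habar.1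
  have hα : 0 < abar := by
    rcases hor0 with h | h
    · rw [h]; exact (ha _ _ hadj0).1
    · rw [h]; have := (ha _ _ hadj0).2; linarith
  have hablt1 : abar < 1 := by
    have h1 : abar ≤ a i0 j0 := habar.2 ⟨i0, j0, hadj0, Or.inl rfl⟩
    have h2 := (ha _ _ hadj0).2
    linarith
  have hab1 : abar ≤ 1 := hablt1.le
  have hedge : ∀ t, (γ t).1 ≠ (γ t).2 ∧ abar ≤ a (γ t).1 (γ t).2 ∧
      abar ≤ 1 - a (γ t).1 (γ t).2 ∧ abar ≤ a (γ t).2 (γ t).1 ∧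
      abar ≤ 1 - a (γ t).2 (γ t).1 := by
    intro t
    have hadj := hγ t
    exact ⟨hadj.ne, habar.2 ⟨_, _, hadj, Or.inl rfl⟩, habar.2 ⟨_, _, hadj, Or.inr rfl⟩,
      habar.2 ⟨_, _, hadj.symm, Or.inl rfl⟩, habar.2 ⟨_, _, hadj.symm, Or.inr rfl⟩⟩
  have hn2 : 2 ≤ n := S14.two_le_of_ne (hγ 0).ne
  have hn : 0 < n := by omega
  set δ := abar ^ (n - 1) with hδdef
  have hδ0 : 0 ≤ δ := pow_nonneg hα.le _
  have hδ1 : δ < 1 := by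
    rw [hδdef]
    exact pow_lt_one₀ hα.le hablt1 (by omega)
  set L := m * (n / 2) with hLdef
  have hL : 0 < L := Nat.mul_pos hm (by omega)
  have key : ∀ s, sNorm (Pseq a γ (s + L)) ≤ (1 - δ) * sNorm (Pseq a γ s) := by
    intro s
    rw [S14.Pseq_shift a γ s L]
    exact S14.sNorm_contract hn (S14.Qw_nonneg hα hedge s L) (S14.Qw_rowsum hedge s L) hδ0
      (fun i₁ i₂ => S14.window_scrambling hα hedge hab1 hspan hn2 s i₁ i₂)
  have base : ∀ r, sNorm (Pseq a γ r) ≤ 1 := by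
    intro r
    rw [S14.Pseq_eq_Qw0]
    refine S14.sNorm_le_of hn fun j i₁ i₂ => ?_
    have h0 := S14.Qw_nonneg hα hedge 0 r
    have h1 : ∀ i, S14.Qw a γ 0 r i j ≤ 1 := by
      intro i
      rw [← S14.Qw_rowsum hedge 0 r i]
      exact Finset.single_le_sum (fun k _ => h0 i k) (Finset.mem_univ j)
    rw [abs_sub_le_iff]
    constructor
    · have := h0 i₂ j; have := h1 i₁; linarith
    · have := h0 i₁ j; have := h1 i₂; linarith
  have iter : ∀ (k r : ℕ), sNorm (Pseq a γ (r + L * k)) ≤ (1 - δ) ^ k := by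
    intro k
    induction k with
    | zero => intro r; simpa using base r
    | succ k ih =>
      intro r
      have h1 : r + L * (k + 1) = (r + L * k) + L := by ring
      rw [h1]
      calc sNorm (Pseq a γ ((r + L * k) + L))
          ≤ (1 - δ) * sNorm (Pseq a γ (r + L * k)) := key _
        _ ≤ (1 - δ) * (1 - δ) ^ k :=
            mul_le_mul_of_nonneg_left (ih r) (by linarith)
        _ = (1 - δ) ^ (k + 1) := by ring
  intro t ht
  have hrepr : t = t % L + L * (t / L) := (Nat.mod_add_div t L).symm
  have hb : sNorm (Pseq a γ t) ≤ (1 - δ) ^ (t / L) := by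
    nth_rewrite 1 [hrepr]
    exact iter (t / L) (t % L)
  have hLpos : (0 : ℝ) < (L : ℝ) := by exact_mod_cast hL
  have hexp : (t : ℝ) / (L : ℝ) - 1 ≤ ((t / L : ℕ) : ℝ) := by
    have hlt : t < L * (t / L) + L := by
      have := Nat.mod_lt t hL
      omega
    rw [sub_le_iff_le_add, div_le_iff₀ hLpos]
    have hcast : (t : ℝ) < (L : ℝ) * ((t / L : ℕ) : ℝ) + (L : ℝ) := by exact_mod_cast hlt
    nlinarith
  calc sNorm (Pseq a γ t) ≤ (1 - δ) ^ (t / L) := hb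
    _ = (1 - δ) ^ (((t / L : ℕ) : ℝ)) := (Real.rpow_natCast _ _).symm
    _ ≤ (1 - δ) ^ ((t : ℝ) / (L : ℝ) - 1) :=
        Real.rpow_le_rpow_of_exponent_ge (by linarith) (by linarith) hexp
end
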